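/- arXiv:1901.04000 — 9 statements merged into one kernel-verified Lean document; each statement's English description precedes it below -/
import Mathlib

section
/- A set X of at most 2n+1 distinct points in ℂ² is n-dependent if and only if some n+2 of its points are collinear. -/
open MvPolynomial

abbrev Poly2 := MvPolynomial (Fin 2) ℂ
abbrev Pt := Fin 2 → ℂ

/-- `p` is an `n`-fundamental polynomial of the point `A` with respect to the set `S`. -/
def IsFund (n : ℕ) (S : Finset Pt) (A : Pt) (p : Poly2) : Prop :=
  p.totalDegree ≤ n ∧ (∀ x ∈ S, x ≠ A → eval x p = 0) ∧ eval A p ≠ 0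

/-- A finite point set is `n`-independent if each of its points has an
`n`-fundamental polynomial. -/
def NIndep (n : ℕ) (S : Finset Pt) : Prop := ∀ A ∈ S, ∃ p : Poly2, IsFund n S A p

/-- A finite point set is essentially `k`-dependent if no point has a
`k`-fundamental polynomial. -/
def EssDep (k : ℕ) (S : Finset Pt) : Prop :=
  ∀ A ∈ S, ∀ p : Poly2, p.totalDegree ≤ k →
    (∀ x ∈ S, x ≠ A → eval x p = 0) → eval A p = 0

/-!
If `n + 2` points of `X` lie on a line, a polynomial of degree `≤ n` vanishing at `n + 1` of them
restricts to a univariate polynomial of degree `≤ n` with `n + 1` roots, so it vanishes on the whole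
line and the last point has no fundamental polynomial.

Conversely, fix `A ∈ X` and put `S = X \ {A}`, so `#S ≤ 2n` and, if no `n + 2` points of `X` are
collinear, every line through `A` carries at most `n` points of `S`. Induct on `n`. If `#S ≤ n`,
take a product of linear forms. Otherwise at most two lines through `A` carry `n` points of `S`,
so some `B, C ∈ S` not collinear with `A` meet all of them. The linear form of the line `BC`
vanishes at `B` and `C` but not at `A`, and the points of `S` off `BC` satisfy the hypotheses
for `n - 1`; multiply the form by the polynomial they provide.
-/

open Finset

section Restriction

variable {σ K : Type*} [Field K]

noncomputable def restrictLine (a v : σ → K) (p : MvPolynomial σ K) : Polynomial K :=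
  aeval (fun i => Polynomial.C (v i) * Polynomial.X + Polynomial.C (a i)) p

lemma eval_restrictLine (a v : σ → K) (p : MvPolynomial σ K) (t : K) :
    (restrictLine a v p).eval t = eval (t • v + a) p := by
  induction p using MvPolynomial.induction_on with
  | C c => simp [restrictLine]
  | add p q hp hq => simp_all [restrictLine]
  | mul_X p i hp =>
    simp only [restrictLine, map_mul, aeval_X, Polynomial.eval_mul] at hp ⊢
    simp [hp, mul_comm (v i)]

lemma natDegree_restrictLine_le (a v : σ → K) (p : MvPolynomial σ K) :
    (restrictLine a v p).natDegree ≤ p.totalDegree := by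
  conv_lhs => rw [restrictLine, p.as_sum, map_sum]
  refine Polynomial.natDegree_sum_le_of_forall_le _ _ fun d hd => ?_
  rw [aeval_monomial, Polynomial.algebraMap_eq]
  refine (Polynomial.natDegree_C_mul_le _ _).trans <| (Polynomial.natDegree_prod_le _ _).trans <|
    (Finset.sum_le_sum fun i _ => ?_).trans (le_totalDegree hd)
  calc _ ≤ d i * (Polynomial.C (v i) * Polynomial.X + Polynomial.C (a i)).natDegree :=
        Polynomial.natDegree_pow_le
    _ ≤ d i * 1 := Nat.mul_le_mul_left _ Polynomial.natDegree_linear_le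
    _ = d i := mul_one _

theorem MvPolynomial.eval_eq_zero_of_collinear {Y : Finset (σ → K)} {z : σ → K}
    (hY : Collinear K (insert z (Y : Set (σ → K)))) {p : MvPolynomial σ K}
    (hdeg : p.totalDegree < #Y) (hp : ∀ y ∈ Y, eval y p = 0) : eval z p = 0 := by
  classical
  obtain ⟨a, v, hline⟩ := (collinear_iff_exists_forall_eq_smul_vadd _).1 hY
  choose! r hr using hline
  have hrY : ∀ y ∈ Y, y = r y • v + a := fun y hy => hr y (Set.mem_insert_of_mem _ hy)
  have hrestrict : restrictLine a v p = 0 := by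
    refine Polynomial.eq_zero_of_natDegree_lt_card_of_eval_eq_zero' _ (Y.image r) ?_ ?_
    · simp only [mem_image, forall_exists_index, and_imp, forall_apply_eq_imp_iff₂]
      intro y hy
      rw [eval_restrictLine, ← hrY y hy, hp y hy]
    · rw [card_image_of_injOn fun y hy y' hy' h => by rw [hrY y hy, hrY y' hy', h]]
      exact (natDegree_restrictLine_le a v p).trans_lt hdeg
  rw [hr z (Set.mem_insert _ _), vadd_eq_add, ← eval_restrictLine, hrestrict, Polynomial.eval_zero]

end Restriction

section Pencil

variable (K : Type*) {V P : Type*} [DivisionRing K] [AddCommGroup V] [Module K V] [AddTorsor V P]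

open Classical in
noncomputable def pointsOnLine (S : Finset P) (A x : P) : Finset P := {y ∈ S | y ∈ line[K, A, x]}

variable {K} {S T : Finset P} {A x y : P}

lemma mem_pointsOnLine : y ∈ pointsOnLine K S A x ↔ y ∈ S ∧ y ∈ line[K, A, x] := by
  simp [pointsOnLine]

lemma pointsOnLine_subset : pointsOnLine K S A x ⊆ S := fun _ hy => (mem_pointsOnLine.1 hy).1

lemma pointsOnLine_mono (h : S ⊆ T) : pointsOnLine K S A x ⊆ pointsOnLine K T A x :=
  fun _ hy => mem_pointsOnLine.2 ⟨h (mem_pointsOnLine.1 hy).1, (mem_pointsOnLine.1 hy).2⟩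

lemma line_eq_of_mem_pointsOnLine (hA : A ∉ S) (hy : y ∈ pointsOnLine K S A x) :
    line[K, A, y] = line[K, A, x] :=
  affineSpan_pair_eq_of_right_mem_of_ne (mem_pointsOnLine.1 hy).2
    (ne_of_mem_of_not_mem (mem_pointsOnLine.1 hy).1 hA)

lemma disjoint_pointsOnLine (hA : A ∉ S) {z : P} (hx : x ∉ line[K, A, z]) :
    Disjoint (pointsOnLine K S A x) (pointsOnLine K S A z) := by
  refine disjoint_left.2 fun y hyx hyz => hx ?_
  rw [← line_eq_of_mem_pointsOnLine hA hyz, line_eq_of_mem_pointsOnLine hA hyx]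
  exact right_mem_affineSpan_pair K A x

lemma card_pointsOnLine_lt_of_mem_of_notMem (hST : S ⊆ T) {D : P}
    (hD : D ∈ pointsOnLine K T A x) (hDS : D ∉ S) :
    #(pointsOnLine K S A x) < #(pointsOnLine K T A x) :=
  card_lt_card <| (ssubset_iff_of_subset (pointsOnLine_mono hST)).2
    ⟨D, hD, fun h => hDS (pointsOnLine_subset h)⟩

lemma collinear_of_subset_affineSpan_pair {s : Set P} {p₁ p₂ : P} (h : s ⊆ line[K, p₁, p₂]) :
    Collinear K s := by
  have hline := collinear_pair K p₁ p₂
  rw [Collinear, ← direction_affineSpan] at hline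
  exact Collinear.subset h hline

lemma notMem_affineSpan_pair_of_notMem_affineSpan_pair {B C : P} (hAB : A ≠ B)
    (hC : C ∉ line[K, A, B]) : A ∉ line[K, B, C] := fun h =>
  hC ((collinear_insert_of_mem_affineSpan_pair h).mem_affineSpan_of_mem_of_ne (by simp) (by simp)
    (by simp) hAB)

lemma card_pointsOnLine_erase_le [DecidableEq P] {X : Finset P} {n : ℕ} (hA : A ∈ X)
    (hX : ∀ Y ⊆ X, #Y = n + 2 → ¬Collinear K (Y : Set P)) (x : P) :
    #(pointsOnLine K (X.erase A) A x) ≤ n := by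
  by_contra! hlarge
  have hT : n + 2 ≤ #(insert A (pointsOnLine K (X.erase A) A x)) := by
    rw [card_insert_of_notMem fun h => notMem_erase A X (pointsOnLine_subset h)]
    omega
  obtain ⟨Y, hYT, hY⟩ := exists_subset_card_eq hT
  refine hX Y (hYT.trans (insert_subset hA (pointsOnLine_subset.trans (erase_subset A X)))) hY
    (collinear_of_subset_affineSpan_pair (p₁ := A) (p₂ := x) fun y hy => ?_)
  rcases mem_insert.1 (hYT hy) with rfl | hy
  · exact left_mem_affineSpan_pair K y x
  · exact (mem_pointsOnLine.1 hy).2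

theorem exists_pair_meeting_full_lines (hA : A ∉ S) {k : ℕ} (hS₁ : k + 1 < #S)
    (hS₂ : #S ≤ 2 * k + 2) (hlines : ∀ x ∈ S, #(pointsOnLine K S A x) ≤ k + 1) :
    ∃ B ∈ S, ∃ C ∈ S, C ∉ line[K, A, B] ∧
      ∀ x ∈ S, #(pointsOnLine K S A x) = k + 1 → B ∈ line[K, A, x] ∨ C ∈ line[K, A, x] := by
  classical
  obtain ⟨B, hB, hBmax⟩ :=
    S.exists_max_image (fun x => #(pointsOnLine K S A x)) (card_pos.1 (by omega))
  have hout : (S \ pointsOnLine K S A B).Nonempty := by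
    rw [← card_pos, card_sdiff_of_subset pointsOnLine_subset]
    have := hlines B hB
    omega
  obtain ⟨C, hC, hCmax⟩ :=
    (S \ pointsOnLine K S A B).exists_max_image (fun x => #(pointsOnLine K S A x)) hout
  rw [mem_sdiff] at hC
  have hCB : C ∉ line[K, A, B] := fun h => hC.2 (mem_pointsOnLine.2 ⟨hC.1, h⟩)
  refine ⟨B, hB, C, hC.1, hCB, fun x hx hfull => ?_⟩
  by_cases hxB : x ∈ line[K, A, B]
  · left
    rw [line_eq_of_mem_pointsOnLine hA (mem_pointsOnLine.2 ⟨hx, hxB⟩)]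
    exact right_mem_affineSpan_pair K A B
  by_cases hxC : x ∈ line[K, A, C]
  · right
    rw [line_eq_of_mem_pointsOnLine hA (mem_pointsOnLine.2 ⟨hx, hxC⟩)]
    exact right_mem_affineSpan_pair K A C
  -- By the choice of `B` and `C`, the lines `AB`, `AC`, `Ax` would now carry three disjoint
  -- sets of at least `k + 1` points of `S`.
  exfalso
  have hBx := hBmax x hx
  have hCx := hCmax x (mem_sdiff.2 ⟨hx, fun h => hxB (mem_pointsOnLine.1 h).2⟩)
  have hunion : #(pointsOnLine K S A x ∪ pointsOnLine K S A C ∪ pointsOnLine K S A B) ≤ #S :=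
    card_le_card (union_subset (union_subset pointsOnLine_subset pointsOnLine_subset)
      pointsOnLine_subset)
  rw [card_union_of_disjoint (disjoint_union_left.2 ⟨disjoint_pointsOnLine hA hxB,
    disjoint_pointsOnLine hA hCB⟩), card_union_of_disjoint (disjoint_pointsOnLine hA hxC)] at hunion
  omega

end Pencil

section Vanishing

variable {σ K : Type*} [Field K] [Fintype σ]

theorem exists_eval_eq_of_linearMap (f : (σ → K) →ₗ[K] K) :
    ∃ ℓ : MvPolynomial σ K, ℓ.totalDegree ≤ 1 ∧ ∀ x, eval x ℓ = f x := by
  classical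
  refine ⟨∑ i, C (f (Pi.single i 1)) * X i, ?_, fun x => ?_⟩
  · refine (totalDegree_finsetSum _ _).trans (Finset.sup_le fun i _ => ?_)
    exact (totalDegree_mul _ _).trans (by simp [totalDegree_X])
  · simp [f.pi_apply_eq_sum_univ x, mul_comm, ← Pi.single_apply, Pi.single_comm]

theorem exists_totalDegree_le_one_of_notMem {L : AffineSubspace K (σ → K)} {A : σ → K}
    (hA : A ∉ L) :
    ∃ ℓ : MvPolynomial σ K, ℓ.totalDegree ≤ 1 ∧ (∀ x ∈ L, eval x ℓ = 0) ∧ eval A ℓ ≠ 0 := by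
  rcases (L : Set (σ → K)).eq_empty_or_nonempty with hL | ⟨B, hB⟩
  · exact ⟨1, by simp, fun x hx => absurd (SetLike.mem_coe.2 hx) (hL ▸ id), by simp⟩
  have hAB : A -ᵥ B ∉ L.direction := fun h => hA ((L.vsub_right_mem_direction_iff_mem hB A).1 h)
  obtain ⟨f, hfA, hfL⟩ := Submodule.exists_dual_map_eq_bot_of_notMem hAB inferInstance
  obtain ⟨ℓ, hℓ, hℓf⟩ := exists_eval_eq_of_linearMap f
  have hf : ∀ x, eval x (ℓ - C (f B)) = f (x -ᵥ B) := fun x => by simp [hℓf]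
  refine ⟨ℓ - C (f B), (totalDegree_sub_C_le _ _).trans hℓ, fun x hx => ?_, by rwa [hf]⟩
  rw [hf, ← Submodule.mem_bot K, ← hfL]
  exact Submodule.mem_map_of_mem (L.vsub_mem_direction hx hB)

theorem exists_totalDegree_le_card_of_notMem {S : Finset (σ → K)} {A : σ → K} (hA : A ∉ S) :
    ∃ p : MvPolynomial σ K, p.totalDegree ≤ #S ∧ (∀ x ∈ S, eval x p = 0) ∧ eval A p ≠ 0 := by
  have hsep : ∀ B ∈ S, ∃ ℓ : MvPolynomial σ K, ℓ.totalDegree ≤ 1 ∧ eval B ℓ = 0 ∧ eval A ℓ ≠ 0 := by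
    intro B hB
    have hAB : A ∉ affineSpan K {B} := by
      rw [AffineSubspace.mem_affineSpan_singleton]; rintro rfl; exact hA hB
    obtain ⟨ℓ, hℓ, hℓB, hℓA⟩ := exists_totalDegree_le_one_of_notMem hAB
    exact ⟨ℓ, hℓ, hℓB B (mem_affineSpan K rfl), hℓA⟩
  choose! ℓ hℓ hℓB hℓA using hsep
  refine ⟨∏ B ∈ S, ℓ B, ?_, fun x hx => ?_, ?_⟩
  · calc (∏ B ∈ S, ℓ B).totalDegree ≤ ∑ B ∈ S, (ℓ B).totalDegree := totalDegree_finsetProd _ _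
      _ ≤ ∑ B ∈ S, 1 := sum_le_sum hℓ
      _ = #S := by simp
  · rw [map_prod]; exact prod_eq_zero hx (hℓB x hx)
  · rw [map_prod]; exact prod_ne_zero_iff.2 hℓA

theorem exists_vanishing_of_card_pointsOnLine_le (k : ℕ) {S : Finset (σ → K)} {A : σ → K}
    (hA : A ∉ S) (hS : #S ≤ 2 * k) (hlines : ∀ x ∈ S, #(pointsOnLine K S A x) ≤ k) :
    ∃ p : MvPolynomial σ K, p.totalDegree ≤ k ∧ (∀ x ∈ S, eval x p = 0) ∧ eval A p ≠ 0 := by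
  classical
  induction k generalizing S with
  | zero => exact ⟨1, by simp, by simp [card_eq_zero.1 (Nat.le_zero.1 hS)], by simp⟩
  | succ k ih =>
  rcases le_or_gt #S (k + 1) with hsmall | hlarge
  · obtain ⟨p, hp, hpS, hpA⟩ := exists_totalDegree_le_card_of_notMem hA
    exact ⟨p, hp.trans hsmall, hpS, hpA⟩
  obtain ⟨B, hB, C, hC, hCB, hfull⟩ := exists_pair_meeting_full_lines hA hlarge (by omega) hlines
  obtain ⟨ℓ, hℓ, hℓBC, hℓA⟩ := exists_totalDegree_le_one_of_notMem
    (notMem_affineSpan_pair_of_notMem_affineSpan_pair (ne_of_mem_of_not_mem hB hA).symm hCB)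
  set S' := {x ∈ S | eval x ℓ ≠ 0}
  have hS' : S' ⊆ S := filter_subset _ _
  have hBS' : B ∉ S' := by simp [S', hℓBC B (left_mem_affineSpan_pair K B C)]
  have hCS' : C ∉ S' := by simp [S', hℓBC C (right_mem_affineSpan_pair K B C)]
  have hcard' : #S' ≤ 2 * k := by
    have hBC : B ≠ C := fun h => hCB (h ▸ right_mem_affineSpan_pair K A B)
    have : S' ⊆ S \ {B, C} := fun x hx => by
      simp only [mem_sdiff, mem_insert, mem_singleton, not_or]
      exact ⟨hS' hx, ne_of_mem_of_not_mem hx hBS', ne_of_mem_of_not_mem hx hCS'⟩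
    have := card_le_card this
    rw [card_sdiff_of_subset (by simp [insert_subset_iff, hB, hC]), card_pair hBC] at this
    omega
  have hlines' : ∀ x ∈ S', #(pointsOnLine K S' A x) ≤ k := by
    intro x hx
    rcases (hlines x (hS' hx)).lt_or_eq with hlt | hxfull
    · exact (card_le_card (pointsOnLine_mono hS')).trans (by omega)
    rcases hfull x (hS' hx) hxfull with h | h
    · have := card_pointsOnLine_lt_of_mem_of_notMem hS' (mem_pointsOnLine.2 ⟨hB, h⟩) hBS'
      omega
    · have := card_pointsOnLine_lt_of_mem_of_notMem hS' (mem_pointsOnLine.2 ⟨hC, h⟩) hCS'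
      omega
  obtain ⟨q, hq, hqS', hqA⟩ := ih (fun h => hA (hS' h)) hcard' hlines'
  refine ⟨ℓ * q, (totalDegree_mul _ _).trans (by omega), fun x hx => ?_, by simp [hℓA, hqA]⟩
  by_cases hx' : eval x ℓ = 0
  · simp [hx']
  · simp [hqS' x (mem_filter.2 ⟨hx, hx'⟩)]

end Vanishing

theorem not_nIndep_of_collinear {n : ℕ} {X Y : Finset Pt} (hYX : Y ⊆ X) (hY : n + 2 ≤ #Y)
    (hcol : Collinear ℂ (Y : Set Pt)) : ¬NIndep n X := by
  intro hind
  obtain ⟨A, hA⟩ := card_pos.1 (by omega : 0 < #Y)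
  obtain ⟨p, hp, hpX, hpA⟩ := hind A (hYX hA)
  refine hpA (eval_eq_zero_of_collinear (Y := Y.erase A) ?_ ?_ fun y hy => ?_)
  · rwa [← coe_insert, insert_erase hA]
  · rw [card_erase_of_mem hA]; omega
  · exact hpX y (hYX (mem_of_mem_erase hy)) (ne_of_mem_erase hy)

theorem nIndep_of_forall_not_collinear {n : ℕ} {X : Finset Pt} (hcard : #X ≤ 2 * n + 1)
    (hX : ∀ Y ⊆ X, #Y = n + 2 → ¬Collinear ℂ (Y : Set Pt)) : NIndep n X := by
  intro A hA
  obtain ⟨p, hp, hpS, hpA⟩ := exists_vanishing_of_card_pointsOnLine_le n (notMem_erase A X)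
    (by rw [card_erase_of_mem hA]; omega) fun x _ => card_pointsOnLine_erase_le hA hX x
  exact ⟨p, hp, fun x hx hxA => hpS x (mem_erase.2 ⟨hxA, hx⟩), hpA⟩

theorem stmt2 (n : ℕ) (X : Finset Pt) (hcard : X.card ≤ 2 * n + 1) :
    ¬ NIndep n X ↔ ∃ Y ⊆ X, Y.card = n + 2 ∧ Collinear ℂ (Y : Set Pt) := by
  constructor
  · intro hdep
    by_contra! hX
    exact hdep (nIndep_of_forall_not_collinear hcard hX)
  · rintro ⟨Y, hYX, hY, hcol⟩
    exact not_nIndep_of_collinear hYX hY.ge hcol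
end

section
/- Let σ be a nonzero polynomial of total degree k whose zero set contains an n-independent finite set X ⊂ ℂ². Let Y ⊂ ℂ² be a finite set disjoint from the zero set of σ that is (n-k)-independent. Then X ∪ Y is n-independent. -/
open MvPolynomial

/-!
For a point `A ∈ Y`, multiplying its `(n - k)`-fundamental polynomial in `Y` by `σ` kills `X`
without killing `A`. For a point `A ∈ X` with `n`-fundamental polynomial `p` in `X`, the
`(n - k)`-independence of `Y` lets us interpolate `p / σ` on `Y` by some `s` of degree `≤ n - k`;
then `σ * s` vanishes on `X` and agrees with `p` on `Y`, so `p - σ * s` is fundamental for `A`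
in `X ∪ Y`.
-/

theorem IsFund.mono {m n : ℕ} {S : Finset Pt} {A : Pt} {p : Poly2} (h : IsFund m S A p)
    (hmn : m ≤ n) : IsFund n S A p :=
  ⟨h.1.trans hmn, h.2⟩

theorem NIndep.exists_interpolant {d : ℕ} {Y : Finset Pt} (hY : NIndep d Y) (f : Pt → ℂ) :
    ∃ s : Poly2, s.totalDegree ≤ d ∧ ∀ y ∈ Y, eval y s = f y := by
  choose q hq using hY
  refine ⟨∑ y ∈ Y.attach, C (f y / eval y (q y y.2)) * q y y.2, ?_, fun x hx => ?_⟩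
  · refine (totalDegree_finsetSum _ _).trans (Finset.sup_le fun y _ => ?_)
    exact (totalDegree_mul _ _).trans (by simpa using (hq y y.2).1)
  · rw [map_sum, Finset.sum_eq_single ⟨x, hx⟩]
    · simp [(hq x hx).2.2]
    · rintro ⟨y, hy⟩ _ hyx
      simp [(hq y hy).2.1 x hx fun h => hyx (Subtype.ext h.symm)]
    · simp

theorem IsFund.union_mul {m : ℕ} {X Y : Finset Pt} {A : Pt} {q σ : Poly2}
    (hq : IsFund m Y A q) (hXσ : ∀ x ∈ X, eval x σ = 0) (hAσ : eval A σ ≠ 0) :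
    IsFund (σ.totalDegree + m) (X ∪ Y) A (σ * q) := by
  obtain ⟨hqd, hqz, hqA⟩ := hq
  refine ⟨(totalDegree_mul σ q).trans (by omega), fun x hx hxA => ?_, ?_⟩
  · rcases Finset.mem_union.mp hx with hxX | hxY
    · simp [hXσ x hxX]
    · simp [hqz x hxY hxA]
  · simpa using mul_ne_zero hAσ hqA

theorem IsFund.union_sub {n : ℕ} {X Y : Finset Pt} {A : Pt} {p r : Poly2}
    (hp : IsFund n X A p) (hA : A ∈ X) (hXr : ∀ x ∈ X, eval x r = 0)
    (hYr : ∀ y ∈ Y, eval y r = eval y p) (hr : r.totalDegree ≤ n) :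
    IsFund n (X ∪ Y) A (p - r) := by
  obtain ⟨hpd, hpz, hpA⟩ := hp
  refine ⟨(totalDegree_sub p r).trans (max_le hpd hr), fun x hx hxA => ?_, ?_⟩
  · rcases Finset.mem_union.mp hx with hxX | hxY
    · simp [hXr x hxX, hpz x hxX hxA]
    · simp [hYr x hxY]
  · simpa [hXr A hA] using hpA

theorem stmt5_general (n k : ℕ) (hkn : k ≤ n) (σ : Poly2)
    (hdeg : σ.totalDegree = k) (X Y : Finset Pt)
    (hXσ : ∀ x ∈ X, eval x σ = 0) (hXind : NIndep n X)
    (hYσ : ∀ y ∈ Y, eval y σ ≠ 0) (hYind : NIndep (n - k) Y) :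
    NIndep n (X ∪ Y) := by
  intro A hA
  rcases Finset.mem_union.mp hA with hAX | hAY
  · obtain ⟨p, hp⟩ := hXind A hAX
    obtain ⟨s, hsd, hs⟩ := hYind.exists_interpolant fun y => eval y p / eval y σ
    refine ⟨p - σ * s, hp.union_sub hAX (fun x hx => by simp [hXσ x hx]) (fun y hy => ?_) ?_⟩
    · rw [eval_mul, hs y hy, mul_div_cancel₀ _ (hYσ y hy)]
    · exact (totalDegree_mul σ s).trans (by omega)
  · obtain ⟨q, hq⟩ := hYind A hAY
    exact ⟨σ * q, (hq.union_mul hXσ (hYσ A hAY)).mono (by omega)⟩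

theorem stmt5 (n k : ℕ) (hkn : k ≤ n) (σ : Poly2) (hσ : σ ≠ 0)
    (hdeg : σ.totalDegree = k) (X Y : Finset Pt)
    (hXσ : ∀ x ∈ X, eval x σ = 0) (hXind : NIndep n X)
    (hYσ : ∀ y ∈ Y, eval y σ ≠ 0) (hYind : NIndep (n - k) Y) :
    NIndep n (X ∪ Y) :=
  stmt5_general n k hkn σ hdeg X Y hXσ hXind hYσ hYind
end

section
/- Suppose X ⊂ ℂ² is essentially k-dependent and σ is a nonzero polynomial of total degree n. If Y := X minus the zero set of σ is nonempty, then Y is essentially (k-n)-dependent. -/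
open MvPolynomial

theorem EssDep.filter_eval_ne_zero {k m : ℕ} {X : Finset Pt} {σ : Poly2} (hX : EssDep k X)
    (hdeg : σ.totalDegree + m ≤ k) : EssDep m (X.filter fun x => eval x σ ≠ 0) := by
  intro A hA p hp hvan
  obtain ⟨hAX, hAσ⟩ := Finset.mem_filter.1 hA
  have hσp_deg : (σ * p).totalDegree ≤ k := (totalDegree_mul σ p).trans (by omega)
  have hσp_van : ∀ x ∈ X, x ≠ A → eval x (σ * p) = 0 := by
    intro x hx hxA
    rw [eval_mul, mul_eq_zero, or_iff_not_imp_left]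
    exact fun hxσ => hvan x (Finset.mem_filter.2 ⟨hx, hxσ⟩) hxA
  have hσp_A := hX A hAX (σ * p) hσp_deg hσp_van
  rw [eval_mul] at hσp_A
  exact (mul_eq_zero.1 hσp_A).resolve_left hAσ

theorem stmt6_general (k n : ℕ) (hnk : n < k) (X Y : Finset Pt) (σ : Poly2)
    (hdeg : σ.totalDegree = n) (hX : EssDep k X)
    (hY : ∀ x, x ∈ Y ↔ x ∈ X ∧ eval x σ ≠ 0) :
    EssDep (k - n) Y := by
  have hY_eq : Y = X.filter fun x => eval x σ ≠ 0 := by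
    ext x
    rw [hY, Finset.mem_filter]
  rw [hY_eq]
  exact hX.filter_eval_ne_zero (by omega)

theorem stmt6 (k n : ℕ) (hnk : n < k) (X Y : Finset Pt) (σ : Poly2)
    (hσ : σ ≠ 0) (hdeg : σ.totalDegree = n) (hX : EssDep k X)
    (hY : ∀ x, x ∈ Y ↔ x ∈ X ∧ eval x σ ≠ 0) (hYne : Y.Nonempty) :
    EssDep (k - n) Y :=
  stmt6_general k n hnk X Y σ hdeg hX hY
end

section
/- Let σ = σ₁⋯σ_s be a product of polynomials of degrees n₁,…,n_s with n = n₁+⋯+n_s, and let X ⊂ ℂ² be a finite set contained in the zero set of σ that is essentially k-dependent. For i = 1,…,s let X_i be the set of points of X lying on σ_i but on no other component σ_j (j ≠ i). If all X_i are nonempty, then each X_i is essentially (k - n + n_i)-dependent. -/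
open MvPolynomial

/-!
If `p` were a `(k - n + nᵢ)`-fundamental polynomial of a point `A` of `Xᵢ`, then
`p * ∏_{j ≠ i} σⱼ` would be a `k`-fundamental polynomial of `A` in `X`: it has degree at most `k`,
vanishes on `Xᵢ \ {A}` through `p` and on the rest of `X` through some `σⱼ` with `j ≠ i`,
and is nonzero at `A` because `A` lies on no `σⱼ` with `j ≠ i`.
-/

theorem EssDep.of_mul_vanishing {k k' d : ℕ} {S T : Finset Pt} (hS : EssDep k S) (hTS : T ⊆ S)
    (hk : k' + d ≤ k) {r : Poly2} (hr : r.totalDegree ≤ d)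
    (hrS : ∀ x ∈ S, x ∉ T → eval x r = 0) (hrT : ∀ A ∈ T, eval A r ≠ 0) : EssDep k' T := by
  intro A hA p hp hpT
  have hdeg : (p * r).totalDegree ≤ k :=
    (totalDegree_mul p r).trans (by omega)
  have hvanish : ∀ x ∈ S, x ≠ A → eval x (p * r) = 0 := by
    intro x hx hxA
    by_cases hxT : x ∈ T
    · simp [hpT x hxT hxA]
    · simp [hrS x hx hxT]
  have hprod : eval A p * eval A r = 0 := by
    simpa using hS A (hTS hA) (p * r) hdeg hvanish
  exact (mul_eq_zero.mp hprod).resolve_right (hrT A hA)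

theorem MvPolynomial.totalDegree_prod_erase_le {ι τ R : Type*} [Fintype ι] [DecidableEq ι]
    [CommSemiring R] (f : ι → MvPolynomial τ R) (i : ι) :
    (∏ j ∈ Finset.univ.erase i, f j).totalDegree ≤
      ∑ j, (f j).totalDegree - (f i).totalDegree := by
  have hsplit := Finset.add_sum_erase Finset.univ (fun j => (f j).totalDegree) (Finset.mem_univ i)
  exact (totalDegree_finsetProd _ _).trans (by omega)

theorem MvPolynomial.eval_prod_erase_eq_zero_iff {ι τ R : Type*} [Fintype ι] [DecidableEq ι]
    [CommRing R] [IsDomain R] (f : ι → MvPolynomial τ R) (i : ι) (x : τ → R) :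
    eval x (∏ j ∈ Finset.univ.erase i, f j) = 0 ↔ ∃ j, j ≠ i ∧ eval x (f j) = 0 := by
  simp [Finset.prod_eq_zero_iff]

theorem stmt7_general (k n s : ℕ) (σ : Fin s → Poly2)
    (hn : n = ∑ i, (σ i).totalDegree) (hnk : n ≤ k)
    (X : Finset Pt) (hXσ : ∀ x ∈ X, eval x (∏ i, σ i) = 0)
    (hX : EssDep k X) (Xi : Fin s → Finset Pt)
    (hXi : ∀ i x, x ∈ Xi i ↔
      (x ∈ X ∧ eval x (σ i) = 0 ∧ ∀ j, j ≠ i → eval x (σ j) ≠ 0)) :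
    ∀ i, EssDep (k - n + (σ i).totalDegree) (Xi i) := by
  intro i
  have hni : (σ i).totalDegree ≤ n := hn ▸
    Finset.single_le_sum (f := fun j => (σ j).totalDegree) (fun j _ => Nat.zero_le _)
      (Finset.mem_univ i)
  refine hX.of_mul_vanishing (fun x hx => ((hXi i x).mp hx).1) (by omega : _ + (n - _) ≤ k)
    (hn ▸ totalDegree_prod_erase_le σ i) (fun x hx hxi => ?_)
    (fun A hA => (eval_prod_erase_eq_zero_iff σ i A).not.mpr
      (by simpa using ((hXi i A).mp hA).2.2))
  -- `x` lies on some component; if only on `σ i`, it would belong to `Xi i`.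
  rw [eval_prod_erase_eq_zero_iff]
  by_contra! hoff
  obtain ⟨j, -, hj⟩ := Finset.prod_eq_zero_iff.mp (by simpa [eval_prod] using hXσ x hx)
  rcases eq_or_ne j i with rfl | hji
  · exact hxi ((hXi j x).mpr ⟨hx, hj, hoff⟩)
  · exact hoff j hji hj

theorem stmt7 (k n s : ℕ) (σ : Fin s → Poly2)
    (hn : n = ∑ i, (σ i).totalDegree) (hnk : n ≤ k)
    (X : Finset Pt) (hXσ : ∀ x ∈ X, eval x (∏ i, σ i) = 0)
    (hX : EssDep k X) (Xi : Fin s → Finset Pt)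
    (hXi : ∀ i x, x ∈ Xi i ↔
      (x ∈ X ∧ eval x (σ i) = 0 ∧ ∀ j, j ≠ i → eval x (σ j) ≠ 0))
    (hne : ∀ i, (Xi i).Nonempty) :
    ∀ i, EssDep (k - n + (σ i).totalDegree) (Xi i) :=
  stmt7_general k n s σ hn hnk X hXσ hX Xi hXi
end

section
/- Let X₀ be a maximal n-independent subset of a finite set X ⊂ ℂ². Then the dimension of the space of polynomials of degree ≤ n vanishing on X equals dim Π_n − #X₀. -/
open MvPolynomial

/-- The space of polynomials of total degree at most `n` vanishing on `X`. -/
noncomputable def PnX (n : ℕ) (X : Finset Pt) : Submodule ℂ Poly2 :=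
  restrictTotalDegree (Fin 2) ℂ n ⊓
    ⨅ x ∈ X, LinearMap.ker ((aeval (R := ℂ) x : Poly2 →ₐ[ℂ] ℂ).toLinearMap)

lemma mem_PnX_iff {n : ℕ} {X : Finset Pt} {p : Poly2} :
    p ∈ PnX n X ↔ p.totalDegree ≤ n ∧ ∀ x ∈ X, eval x p = 0 := by
  unfold PnX
  simp only [Submodule.mem_inf, Submodule.mem_iInf, LinearMap.mem_ker,
    AlgHom.toLinearMap_apply, mem_restrictTotalDegree]
  exact Iff.rfl

lemma indep_insert {n : ℕ} {X₀ : Finset Pt} (hind : NIndep n X₀) {A : Pt} {p : Poly2}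
    (hdeg : p.totalDegree ≤ n) (hv : ∀ x ∈ X₀, eval x p = 0) (hA : eval A p ≠ 0) :
    NIndep n (insert A X₀) := by
  intro B hB
  rcases Finset.mem_insert.mp hB with rfl | hB
  · exact ⟨p, hdeg, fun x hx hne =>
      hv x ((Finset.mem_insert.mp hx).resolve_left hne), hA⟩
  · obtain ⟨q, hq1, hq2, hq3⟩ := hind B hB
    refine ⟨q - C (eval A q / eval A p) * p, ?_, ?_, ?_⟩
    · refine (totalDegree_sub _ _).trans (max_le hq1 ?_)
      refine (totalDegree_mul _ _).trans ?_
      simpa using hdeg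
    · intro x hx hne
      rcases Finset.mem_insert.mp hx with hx' | hx'
      · rw [show x = A from hx']
        simp only [map_sub, map_mul, eval_C]
        rw [div_mul_cancel₀ _ hA, sub_self]
      · simp [hv x hx', hq2 x hx' hne]
    · have hpB : eval B p = 0 := hv B hB
      simp [hpB, hq3]

set_option maxHeartbeats 1000000 in
set_option synthInstance.maxHeartbeats 400000 in
theorem stmt9 (n : ℕ) (X X₀ : Finset Pt) (hsub : X₀ ⊆ X)
    (hind : NIndep n X₀)
    (hmax : ∀ A ∈ X, A ∉ X₀ → ¬ NIndep n (insert A X₀)) :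
    2 * (Module.finrank ℂ (PnX n X) + X₀.card) = (n + 1) * (n + 2) := by
  classical
  -- Step 1: vanishing on X₀ forces vanishing on X
  have hXX₀ : PnX n X = PnX n X₀ := by
    apply le_antisymm
    · intro p hp
      rw [mem_PnX_iff] at hp ⊢
      exact ⟨hp.1, fun x hx => hp.2 x (hsub hx)⟩
    · intro p hp
      rw [mem_PnX_iff] at hp ⊢
      refine ⟨hp.1, fun A hA => ?_⟩
      by_cases hA0 : A ∈ X₀
      · exact hp.2 A hA0
      · by_contra hne
        exact hmax A hA hA0 (indep_insert hind hp.1 hp.2 hne)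
  set V := restrictTotalDegree (Fin 2) ℂ n with hV
  let L : V →ₗ[ℂ] (↥X₀ → ℂ) :=
    LinearMap.pi fun a => ((aeval (R := ℂ) (a : Pt)).toLinearMap).comp V.subtype
  -- Step 2: surjectivity of evaluation on X₀
  have hsurj : LinearMap.range L = ⊤ := by
    rw [eq_top_iff]
    intro f _
    have hf : f = ∑ a : ↥X₀, f a • fun j => if a = j then (1:ℂ) else 0 :=
      pi_eq_sum_univ f
    rw [hf]
    refine Submodule.sum_mem _ fun a _ => Submodule.smul_mem _ _ ?_
    obtain ⟨p, hp1, hp2, hp3⟩ := hind a a.2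
    have hq : C (eval (a : Pt) p)⁻¹ * p ∈ V := by
      rw [hV, mem_restrictTotalDegree]
      refine (totalDegree_mul _ _).trans ?_
      simpa using hp1
    refine ⟨⟨C (eval (a : Pt) p)⁻¹ * p, hq⟩, ?_⟩
    funext j
    simp only [L, LinearMap.pi_apply, LinearMap.comp_apply, Submodule.coe_subtype,
      AlgHom.toLinearMap_apply]
    show eval (j : Pt) (C (eval (a : Pt) p)⁻¹ * p) = _
    by_cases h : a = j
    · subst h
      simp [inv_mul_cancel₀ hp3]
    · have hne : (j : Pt) ≠ (a : Pt) := fun hc => h (Subtype.ext hc.symm)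
      simp [hp2 (j : Pt) j.2 hne, h]
  -- Step 3: kernel of evaluation is PnX n X₀
  have hle : PnX n X₀ ≤ V := fun p hp =>
    (mem_restrictTotalDegree _ _ _).mpr ((mem_PnX_iff.mp hp).1)
  have hker : Submodule.comap V.subtype (PnX n X₀) = LinearMap.ker L := by
    ext v
    simp only [Submodule.mem_comap, LinearMap.mem_ker, mem_PnX_iff,
      Submodule.coe_subtype]
    constructor
    · intro h
      funext a
      show eval (a : Pt) (v : Poly2) = 0
      exact h.2 _ a.2
    · intro h
      refine ⟨(mem_restrictTotalDegree _ _ _).mp v.2, fun x hx => ?_⟩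
      have := congrFun h ⟨x, hx⟩
      simpa [L] using this
  have e1 : Module.finrank ℂ (PnX n X₀) = Module.finrank ℂ (LinearMap.ker L) := by
    rw [← hker]
    exact (Submodule.comapSubtypeEquivOfLe hle).finrank_eq.symm
  have hrn := LinearMap.finrank_range_add_finrank_ker L
  have hrange : Module.finrank ℂ (LinearMap.range L) = X₀.card := by
    rw [hsurj, finrank_top, Module.finrank_fintype_fun_eq_card, Fintype.card_coe]
  -- Step 4: dimension of V
  have hdim : 2 * Module.finrank ℂ V = (n + 1) * (n + 2) := by
    let S : Set (Fin 2 →₀ ℕ) := {s | (s.sum fun _ e => e) ≤ n}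
    let b : Module.Basis S ℂ V := basisRestrictSupport ℂ S
    let F : Finset (ℕ × ℕ) := (Finset.range (n+1)).biUnion Finset.HasAntidiagonal.antidiagonal
    have hmemF : ∀ p : ℕ × ℕ, p ∈ F ↔ p.1 + p.2 ≤ n := by
      intro p
      simp only [F, Finset.mem_biUnion, Finset.mem_range, Finset.HasAntidiagonal.mem_antidiagonal]
      exact ⟨fun ⟨k, hk, hs⟩ => by omega, fun h => ⟨p.1 + p.2, by omega, rfl⟩⟩
    have hsum : ∀ s : Fin 2 →₀ ℕ, (s.sum fun _ e => e) = s 0 + s 1 := fun s => by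
      rw [Finsupp.sum_fintype _ _ (fun _ => rfl)]; exact Fin.sum_univ_two _
    let e0 : (Fin 2 →₀ ℕ) ≃ (ℕ × ℕ) :=
      Finsupp.equivFunOnFinite.trans (piFinTwoEquiv fun _ => ℕ)
    let e : S ≃ ↥F := e0.subtypeEquiv fun s => by
      show (s.sum fun _ e => e) ≤ n ↔ e0 s ∈ F
      rw [hmemF, hsum]
      exact Iff.rfl
    haveI : Fintype S := Fintype.ofEquiv ↥F e.symm
    have hcard : Fintype.card S = F.card := by
      rw [Fintype.card_congr e, Fintype.card_coe]
    rw [Module.finrank_eq_card_basis b, hcard]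
    show 2 * ((Finset.range (n+1)).biUnion Finset.HasAntidiagonal.antidiagonal).card = (n+1)*(n+2)
    rw [Finset.card_biUnion]
    · have h : ∑ k ∈ Finset.range (n+2), k = ∑ k ∈ Finset.range (n+1), (k+1) := by
        rw [Finset.sum_range_succ' (fun k => k) (n+1)]; simp
      have h2 := Finset.sum_range_id_mul_two (n+2)
      have h3 : (n+2)*(n+2-1) = (n+1)*(n+2) := by simp; ring
      simp only [Finset.Nat.card_antidiagonal]
      omega
    · intro i _ j _ hij
      simp only [Finset.disjoint_left, Finset.HasAntidiagonal.mem_antidiagonal]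
      rintro ⟨a, b⟩ h1 h2
      omega
  rw [hXX₀, e1]
  omega
end

section
/- Let k ≤ n+2 and let σ be a squarefree nonzero polynomial of total degree k. A finite set X contained in the zero set of σ is n-complete in σ if and only if X contains an n-independent subset X₀ with #X₀ = d(k,n) := dim Π_n − dim Π_{n−k} = k(2n−k+3)/2. -/
open MvPolynomial Module
set_option synthInstance.maxHeartbeats 1000000
set_option maxHeartbeats 1000000

noncomputable section

abbrev VV (m : ℕ) : Submodule ℂ Poly2 := restrictTotalDegree (Fin 2) ℂ m

def fnl (n : ℕ) (x : Pt) : Module.Dual ℂ (VV n) :=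
  ((aeval x : Poly2 →ₐ[ℂ] ℂ).toLinearMap).comp (VV n).subtype

lemma fnl_apply (n : ℕ) (x : Pt) (p : VV n) : fnl n x p = eval x (p : Poly2) := by
  have h := coe_aeval_eq_eval (f := x)
  have h2 := RingHom.congr_fun h (p : Poly2)
  exact h2

def EE (n : ℕ) (S : Finset Pt) : (VV n) →ₗ[ℂ] (S → ℂ) :=
  LinearMap.pi (fun x : S => fnl n x.1)

lemma EE_apply (n : ℕ) (S : Finset Pt) (p : VV n) (x : S) :
    EE n S p x = eval x.1 (p : Poly2) := fnl_apply n x.1 p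

lemma rank_eq_span (n : ℕ) (S : Finset Pt) :
    finrank ℂ (LinearMap.range (EE n S)) =
      finrank ℂ (Submodule.span ℂ (Set.range fun x : S => fnl n x.1)) := by
  classical
  rw [← LinearMap.finrank_range_dualMap_eq_finrank_range]
  have hR : LinearMap.range ((EE n S).dualMap)
      = Submodule.span ℂ (Set.range fun x : S => fnl n x.1) := by
    apply le_antisymm
    · rintro _ ⟨φ, rfl⟩
      have hφ : (EE n S).dualMap φ
          = ∑ x : S, φ (fun j => if x = j then 1 else 0) • fnl n x.1 := by
        ext p
        have h1 : EE n S p = ∑ x : S, EE n S p x • fun j => if x = j then (1:ℂ) else 0 :=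
          pi_eq_sum_univ (EE n S p)
        have h2 : (EE n S).dualMap φ p = φ (EE n S p) := rfl
        rw [h2, h1, map_sum, LinearMap.sum_apply]
        refine Finset.sum_congr rfl fun x _ => ?_
        rw [map_smul, LinearMap.smul_apply]
        simp only [smul_eq_mul]
        rw [mul_comm]
        rw [EE_apply n S p x, fnl_apply]
      rw [hφ]
      exact Submodule.sum_mem _ fun x _ =>
        Submodule.smul_mem _ _ (Submodule.subset_span ⟨x, rfl⟩)
    · rw [Submodule.span_le]
      rintro _ ⟨x, rfl⟩
      refine ⟨LinearMap.proj x, ?_⟩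
      rw [show ((EE n S).dualMap) (LinearMap.proj x) = (LinearMap.proj x).comp (EE n S) from rfl,
        EE, LinearMap.proj_pi]
  rw [hR]

/-- surjectivity gives fundamental polynomials -/
lemma fund_of_surj (n : ℕ) (S : Finset Pt) (h : Function.Surjective (EE n S))
    (A : Pt) (hA : A ∈ S) :
    ∃ p : Poly2, p.totalDegree ≤ n ∧ (∀ x ∈ S, x ≠ A → eval x p = 0) ∧ eval A p ≠ 0 := by
  classical
  obtain ⟨p, hp⟩ := h (fun x => if x.1 = A then 1 else 0)
  refine ⟨(p : Poly2), (mem_restrictTotalDegree _ n _).1 p.2, ?_, ?_⟩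
  · intro x hx hxA
    have := congrFun hp ⟨x, hx⟩
    rw [EE_apply] at this
    simpa [hxA] using this
  · have := congrFun hp ⟨A, hA⟩
    rw [EE_apply] at this
    simp only [if_pos rfl] at this
    rw [this]
    exact one_ne_zero

/-- fundamental polynomials give surjectivity -/
lemma surj_of_fund (n : ℕ) (S : Finset Pt)
    (h : ∀ A ∈ S, ∃ p : Poly2, p.totalDegree ≤ n ∧ (∀ x ∈ S, x ≠ A → eval x p = 0) ∧ eval A p ≠ 0) :
    Function.Surjective (EE n S) := by
  classical
  rw [← LinearMap.range_eq_top]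
  rw [eq_top_iff]
  intro v _
  rw [pi_eq_sum_univ v]
  refine Submodule.sum_mem _ fun A _ => Submodule.smul_mem _ _ ?_
  obtain ⟨p, hdeg, hvan, hnz⟩ := h A.1 A.2
  have hmem : p ∈ VV n := (mem_restrictTotalDegree _ n p).2 hdeg
  have key : EE n S ((eval A.1 p)⁻¹ • ⟨p, hmem⟩) = fun j => if A = j then 1 else 0 := by
    funext x
    rw [map_smul]
    simp only [Pi.smul_apply, smul_eq_mul]
    rw [EE_apply]
    by_cases hxA : x = A
    · subst hxA
      simp only [if_pos rfl]
      exact inv_mul_cancel₀ hnz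
    · rw [if_neg (Ne.symm ?_)]
      · have : x.1 ≠ A.1 := fun hc => hxA (Subtype.ext hc)
        rw [hvan x.1 x.2 this, mul_zero]
      · exact hxA
  exact ⟨_, key⟩

def WW (n k : ℕ) (σ : Poly2) : Submodule ℂ Poly2 :=
  (VV (n-k)).map (LinearMap.mulRight ℂ σ) ⊓ VV n

lemma mem_WW {n k : ℕ} {σ p : Poly2} :
    p ∈ WW n k σ ↔ (∃ q : Poly2, q.totalDegree ≤ n - k ∧ p = q * σ) ∧ p.totalDegree ≤ n := by
  simp only [WW, Submodule.mem_inf, Submodule.mem_map, mem_restrictTotalDegree]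
  constructor
  · rintro ⟨⟨q, hq, rfl⟩, h2⟩
    exact ⟨⟨q, hq, rfl⟩, h2⟩
  · rintro ⟨⟨q, hq, rfl⟩, h2⟩
    exact ⟨⟨q, hq, rfl⟩, h2⟩

lemma finrank_WW {n k : ℕ} {σ : Poly2} (hσ : σ ≠ 0) (hdeg : σ.totalDegree = k) (hkn : k ≤ n) :
    finrank ℂ (WW n k σ) = finrank ℂ (VV (n-k)) := by
  have hle : (VV (n-k)).map (LinearMap.mulRight ℂ σ) ≤ VV n := by
    rintro _ ⟨q, hq, rfl⟩
    rw [SetLike.mem_coe, mem_restrictTotalDegree] at hq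
    show q * σ ∈ VV n
    rw [mem_restrictTotalDegree]
    calc (LinearMap.mulRight ℂ σ q).totalDegree = (q * σ).totalDegree := rfl
      _ ≤ q.totalDegree + σ.totalDegree := totalDegree_mul q σ
      _ ≤ (n-k) + k := add_le_add hq (le_of_eq hdeg)
      _ = n := by omega
  have hWW : WW n k σ = (VV (n-k)).map (LinearMap.mulRight ℂ σ) := inf_eq_left.2 hle
  rw [hWW]
  have hinj : Function.Injective (LinearMap.mulRight ℂ σ) := by
    intro a b hab
    exact mul_left_injective₀ hσ hab
  exact (LinearEquiv.finrank_eq (Submodule.equivMapOfInjective _ hinj (VV (n-k)))).symm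

lemma eq_C_of_tdeg {q : Poly2} (h : q.totalDegree = 0) : q = C (coeff 0 q) := by
  classical
  have hall := (totalDegree_eq_zero_iff _ q).1 h
  ext m
  by_cases hm : m = 0
  · subst hm; simp
  · rw [coeff_C, if_neg (Ne.symm hm)]
    by_cases hmem : m ∈ q.support
    · exfalso
      exact hm (Finsupp.ext (hall m hmem))
    · exact notMem_support_iff.1 hmem

lemma WW_bot {n k : ℕ} {σ : Poly2} (hσ : σ ≠ 0) (hdeg : σ.totalDegree = k) (hkn : n < k) :
    WW n k σ = ⊥ := by
  rw [eq_bot_iff]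
  intro p hp
  obtain ⟨⟨q, hq, rfl⟩, h2⟩ := mem_WW.1 hp
  have hq0 : q.totalDegree = 0 := by omega
  obtain ⟨c, hqC⟩ : ∃ c : ℂ, q = C c := ⟨_, eq_C_of_tdeg hq0⟩
  rw [Submodule.mem_bot]
  by_contra hne
  have hc : c ≠ 0 := by
    intro hc0
    rw [hqC, hc0, map_zero, zero_mul] at hne
    exact hne rfl
  have hσeq : σ = C c⁻¹ * (q * σ) := by
    rw [hqC, ← mul_assoc, ← map_mul, inv_mul_cancel₀ hc, map_one, one_mul]
  have : σ.totalDegree ≤ n := by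
    calc σ.totalDegree = (C c⁻¹ * (q * σ)).totalDegree := by rw [← hσeq]
      _ ≤ (C c⁻¹ : Poly2).totalDegree + (q * σ).totalDegree := totalDegree_mul _ _
      _ = (q * σ).totalDegree := by rw [totalDegree_C, zero_add]
      _ ≤ n := h2
  omega

lemma card_aux (m : ℕ) : ∀ p : ℕ × ℕ, p ∈ (Finset.range (m+1)).biUnion (fun j => Finset.HasAntidiagonal.antidiagonal j) ↔ p.1 + p.2 ≤ m := by
  intro p
  simp only [Finset.mem_biUnion, Finset.mem_range, Finset.HasAntidiagonal.mem_antidiagonal]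
  constructor
  · rintro ⟨j, hj, h⟩; omega
  · intro h; exact ⟨p.1 + p.2, by omega, rfl⟩

lemma card_T (m : ℕ) : 2 * ((Finset.range (m+1)).biUnion (fun j => Finset.HasAntidiagonal.antidiagonal j)).card = (m+1)*(m+2) := by
  rw [Finset.card_biUnion]
  · have h0 : ∑ j ∈ Finset.range (m+1), (Finset.HasAntidiagonal.antidiagonal j).card
        = ∑ j ∈ Finset.range (m+1), (j+1) := by
      simp [Finset.Nat.card_antidiagonal]
    rw [h0, Finset.sum_add_distrib, Finset.sum_const, Finset.card_range]
    have h : (∑ i ∈ Finset.range (m+1), i) * 2 = (m+1) * m := by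
      simpa using Finset.sum_range_id_mul_two (m+1)
    simp only [smul_eq_mul, mul_one]
    nlinarith [h]
  · intro a _ b _ hab
    simp only [Finset.disjoint_left, Finset.HasAntidiagonal.mem_antidiagonal]
    rintro x h1 h2; exact hab (h1.symm.trans h2)

lemma dim_V (m : ℕ) : 2 * finrank ℂ (VV m) = (m+1)*(m+2) := by
  classical
  set s : Set (Fin 2 →₀ ℕ) := { d | (d.sum fun _ e => e) ≤ m } with hs
  have b : Basis s ℂ (VV m) := basisRestrictSupport ℂ s
  set T : Finset (ℕ × ℕ) := (Finset.range (m+1)).biUnion (fun j => Finset.HasAntidiagonal.antidiagonal j) with hT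
  have e : s ≃ {p : ℕ × ℕ // p ∈ T} := by
    refine (Equiv.subtypeEquiv ((Finsupp.equivFunOnFinite).trans (finTwoArrowEquiv ℕ)) ?_)
    intro d
    rw [card_aux]
    simp [hs, Finsupp.sum_fintype, Fin.sum_univ_two, finTwoArrowEquiv, Finsupp.equivFunOnFinite]
  haveI : Fintype s := Fintype.ofEquiv _ e.symm
  have hcard : Fintype.card s = T.card := by
    rw [Fintype.card_congr e]; exact Fintype.card_coe T
  rw [Module.finrank_eq_card_basis b, hcard]
  exact card_T m

lemma arith {k n : ℕ} (hkn : k ≤ n + 2) {σ : Poly2} (hσ : σ ≠ 0) (hdeg : σ.totalDegree = k) :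
    finrank ℂ (WW n k σ) ≤ finrank ℂ (VV n) ∧
    2 * (finrank ℂ (VV n) - finrank ℂ (WW n k σ)) = k * (2*n+3-k) := by
  by_cases hk : k ≤ n
  · rw [finrank_WW hσ hdeg hk]
    set m := n - k with hm
    have h1 := dim_V n
    have h2 := dim_V m
    have key : (n+1)*(n+2) = (m+1)*(m+2) + k*(2*n+3-k) := by
      have e1 : 2*n+3-k = 2*m+k+3 := by omega
      have e2 : n = m + k := by omega
      rw [e1, e2]; ring
    set A := (n+1)*(n+2)
    set B := (m+1)*(m+2)
    set Ck := k*(2*n+3-k)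
    omega
  · rw [WW_bot hσ hdeg (by omega), finrank_bot]
    have h1 := dim_V n
    have hk2 : k = n+1 ∨ k = n+2 := by omega
    rcases hk2 with rfl | rfl
    · have e1 : 2*n+3-(n+1) = n+2 := by omega
      rw [e1]
      set A := (n+1)*(n+2)
      omega
    · have e1 : 2*n+3-(n+2) = n+1 := by omega
      rw [e1]
      have key : (n+2)*(n+1) = (n+1)*(n+2) := by ring
      set A := (n+1)*(n+2)
      set B := (n+2)*(n+1)
      omega

lemma ker_le_of_subset (n : ℕ) {S T : Finset Pt} (hST : S ⊆ T) :
    LinearMap.ker (EE n T) ≤ LinearMap.ker (EE n S) := by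
  intro p hp
  rw [LinearMap.mem_ker] at hp ⊢
  funext x
  have := congrFun hp ⟨x.1, hST x.2⟩
  rw [EE_apply] at this
  rw [Pi.zero_apply] at this ⊢
  rw [EE_apply]
  exact this

end

theorem stmt10 (k n : ℕ) (hkn : k ≤ n + 2) (σ : Poly2) (hσ : σ ≠ 0)
    (hsf : Squarefree σ) (hdeg : σ.totalDegree = k)
    (X : Finset Pt) (hXσ : ∀ x ∈ X, eval x σ = 0) :
    (∀ p : Poly2, p.totalDegree ≤ n → (∀ x ∈ X, eval x p = 0) →
        ∃ q : Poly2, q.totalDegree ≤ n - k ∧ p = q * σ) ↔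
      ∃ X₀ ⊆ X, NIndep n X₀ ∧ 2 * X₀.card = k * (2 * n + 3 - k) := by
  classical
  obtain ⟨hle, h2d⟩ := arith hkn hσ hdeg
  set d := finrank ℂ (VV n) - finrank ℂ (WW n k σ) with hd
  set W' : Submodule ℂ (VV n) := Submodule.comap (VV n).subtype (WW n k σ) with hW'
  have hWle : WW n k σ ≤ VV n := inf_le_right
  have hW'rank : finrank ℂ W' = finrank ℂ (WW n k σ) :=
    (Submodule.comapSubtypeEquivOfLe hWle).finrank_eq
  have hW'ker : W' ≤ LinearMap.ker (EE n X) := by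
    intro p hp
    rw [Submodule.mem_comap] at hp
    obtain ⟨⟨q, hq, hpq⟩, -⟩ := mem_WW.1 hp
    rw [LinearMap.mem_ker]
    funext x
    rw [EE_apply, Pi.zero_apply]
    have hpq' : (p : Poly2) = q * σ := hpq
    rw [hpq', map_mul, hXσ x.1 x.2, mul_zero]
  constructor
  · -- forward
    intro hLHS
    have hker : LinearMap.ker (EE n X) = W' := by
      refine le_antisymm ?_ hW'ker
      intro p hp
      rw [LinearMap.mem_ker] at hp
      have hvan : ∀ x ∈ X, eval x (p : Poly2) = 0 := by
        intro x hx
        have := congrFun hp ⟨x, hx⟩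
        rw [EE_apply, Pi.zero_apply] at this
        exact this
      obtain ⟨q, hq, hpq⟩ := hLHS (p : Poly2) ((mem_restrictTotalDegree _ n _).1 p.2) hvan
      rw [Submodule.mem_comap]
      exact mem_WW.2 ⟨⟨q, hq, hpq⟩, (mem_restrictTotalDegree _ n _).1 p.2⟩
    have hrn := LinearMap.finrank_range_add_finrank_ker (EE n X)
    have hrange : finrank ℂ (LinearMap.range (EE n X)) = d := by
      rw [hker, hW'rank] at hrn
      omega
    have hspanall : finrank ℂ (Submodule.span ℂ (Set.range fun x : X => fnl n x.1)) = d := by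
      rw [← rank_eq_span]; exact hrange
    obtain ⟨t, hts, hspan_t, hli⟩ := exists_linearIndependent ℂ (Set.range fun x : X => fnl n x.1)
    have htfin : t.Finite := (Set.finite_range _).subset hts
    haveI : Fintype t := htfin.fintype
    have hcard_t : t.toFinset.card = d := by
      rw [← finrank_span_set_eq_card hli, hspan_t]
      exact hspanall
    set ch : Module.Dual ℂ (VV n) → Pt :=
      fun v => if h : ∃ x : Pt, x ∈ X ∧ fnl n x = v then h.choose else 0 with hch_def
    have hch : ∀ v ∈ t, ch v ∈ X ∧ fnl n (ch v) = v := by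
      intro v hv
      obtain ⟨x, hx⟩ := hts hv
      have hex : ∃ y : Pt, y ∈ X ∧ fnl n y = v := ⟨x.1, x.2, hx⟩
      rw [hch_def]
      simp only [dif_pos hex]
      exact hex.choose_spec
    set X₀ : Finset Pt := t.toFinset.image ch with hX₀
    have hX₀X : X₀ ⊆ X := by
      intro x hx
      rw [hX₀, Finset.mem_image] at hx
      obtain ⟨v, hv, rfl⟩ := hx
      exact (hch v (Set.mem_toFinset.1 hv)).1
    have hinj : Set.InjOn ch ↑t.toFinset := by
      intro u hu w hw huw
      have h1 := (hch u (Set.mem_toFinset.1 hu)).2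
      have h2 := (hch w (Set.mem_toFinset.1 hw)).2
      rw [← h1, ← h2, huw]
    have hcardX₀ : X₀.card = d := by
      rw [hX₀, Finset.card_image_of_injOn hinj, hcard_t]
    have himg : ∀ x ∈ X₀, fnl n x ∈ t := by
      intro x hx
      rw [hX₀, Finset.mem_image] at hx
      obtain ⟨v, hv, rfl⟩ := hx
      rw [(hch v (Set.mem_toFinset.1 hv)).2]
      exact Set.mem_toFinset.1 hv
    have hrangeX₀ : Set.range (fun x : X₀ => fnl n x.1) = t := by
      apply le_antisymm
      · rintro _ ⟨x, rfl⟩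
        exact himg x.1 x.2
      · intro v hv
        have hvmem : ch v ∈ X₀ := by
          rw [hX₀, Finset.mem_image]
          exact ⟨v, Set.mem_toFinset.2 hv, rfl⟩
        exact ⟨⟨ch v, hvmem⟩, (hch v hv).2⟩
    have hrankX₀ : finrank ℂ (LinearMap.range (EE n X₀)) = d := by
      rw [rank_eq_span, hrangeX₀, hspan_t]
      exact hspanall
    have hsurj : Function.Surjective (EE n X₀) := by
      rw [← LinearMap.range_eq_top]
      apply Submodule.eq_top_of_finrank_eq
      rw [hrankX₀, Module.finrank_fintype_fun_eq_card, Fintype.card_coe, hcardX₀]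
    refine ⟨X₀, hX₀X, ?_, ?_⟩
    · intro A hA
      obtain ⟨p, h1, h2, h3⟩ := fund_of_surj n X₀ hsurj A hA
      exact ⟨p, h1, h2, h3⟩
    · rw [hcardX₀]
      exact h2d
  · -- backward
    rintro ⟨X₀, hX₀X, hNI, hcard⟩ p hdegp hvanp
    have hsurj : Function.Surjective (EE n X₀) := by
      apply surj_of_fund
      intro A hA
      obtain ⟨q, h1, h2, h3⟩ := hNI A hA
      exact ⟨q, h1, h2, h3⟩
    have hcardd : X₀.card = d := by omega
    have hrX₀ : finrank ℂ (LinearMap.range (EE n X₀)) = d := by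
      rw [LinearMap.range_eq_top.2 hsurj, finrank_top, Module.finrank_fintype_fun_eq_card,
        Fintype.card_coe, hcardd]
    have hrn := LinearMap.finrank_range_add_finrank_ker (EE n X₀)
    have hkerX₀ : finrank ℂ (LinearMap.ker (EE n X₀)) = finrank ℂ (WW n k σ) := by omega
    have hmono : finrank ℂ (LinearMap.ker (EE n X)) ≤ finrank ℂ (LinearMap.ker (EE n X₀)) :=
      Submodule.finrank_mono (ker_le_of_subset n hX₀X)
    have heq : W' = LinearMap.ker (EE n X) := by
      apply Submodule.eq_of_le_of_finrank_le hW'ker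
      rw [hW'rank]
      omega
    have hpmem : (⟨p, (mem_restrictTotalDegree _ n p).2 hdegp⟩ : VV n) ∈ LinearMap.ker (EE n X) := by
      rw [LinearMap.mem_ker]
      funext x
      rw [EE_apply, Pi.zero_apply]
      exact hvanp x.1 x.2
    rw [← heq, hW', Submodule.mem_comap] at hpmem
    obtain ⟨⟨q, hq, hpq⟩, -⟩ := mem_WW.1 hpmem
    exact ⟨q, hq, hpq⟩
end

section
/- Suppose X ⊂ ℂ² with #X = mn, m ≤ n, is the set of common zeros of two polynomials σ_m and σ_n of degrees m and n with no common factor (so X = σ_m ∩ σ_n is a complete intersection). Then no nonzero polynomial of total degree less than m vanishes on all of X. -/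
open MvPolynomial

set_option maxHeartbeats 1000000

noncomputable section AuxiliaryBezout

/-- substitution x_i ↦ v_i * t -/
noncomputable def subst (v : Pt) : Poly2 →ₐ[ℂ] Polynomial ℂ :=
  MvPolynomial.aeval (fun i => Polynomial.C (v i) * Polynomial.X)

lemma coeff_subst (v : Pt) (q : Poly2) (k : ℕ) :
    (subst v q).coeff k = MvPolynomial.eval v (homogeneousComponent k q) := by
  induction q using MvPolynomial.induction_on' with
  | add p q hp hq =>
    simp only [subst, map_add, Polynomial.coeff_add] at *
    rw [hp, hq]
  | monomial u c =>
    have hhom : (monomial u c).IsHomogeneous (Finsupp.degree u) :=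
      isHomogeneous_monomial _ rfl
    rw [homogeneousComponent_of_mem ((mem_homogeneousSubmodule (σ := Fin 2) (R := ℂ) (n := Finsupp.degree u) (p := monomial u c)).2 hhom)]
    have : (subst v) (monomial u c)
        = Polynomial.C (c * ∏ i ∈ u.support, v i ^ u i) * Polynomial.X ^ (Finsupp.degree u) := by
      rw [subst, aeval_monomial]
      simp only [Finsupp.prod, mul_pow, ← Polynomial.C_pow]
      rw [Finset.prod_mul_distrib, ← map_prod, Finset.prod_pow_eq_pow_sum]
      rw [← mul_assoc, Polynomial.algebraMap_eq, ← map_mul, Finsupp.degree]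
      rfl
    rw [this]
    simp only [Polynomial.coeff_C_mul, Polynomial.coeff_X_pow]
    by_cases h : k = Finsupp.degree u
    · rw [if_pos h, if_pos h, eval_monomial]
      simp [Finsupp.prod]
    · rw [if_neg h, if_neg h, map_zero, mul_zero]

lemma hc_top_ne_zero (q : Poly2) (hq : q ≠ 0) :
    homogeneousComponent q.totalDegree q ≠ 0 := by
  obtain ⟨u, hu, hdeg⟩ := q.support.exists_mem_eq_sup
    (Finset.nonempty_iff_ne_empty.mpr (by rwa [Ne, support_eq_empty])) (fun s => s.sum fun _ e => e)
  intro h0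
  have : coeff u (homogeneousComponent q.totalDegree q) = coeff u q := by
    rw [coeff_homogeneousComponent, if_pos]
    rw [totalDegree, hdeg]; rfl
  rw [h0] at this
  exact (mem_support_iff.mp hu) (by simpa using this.symm)

lemma totalDegree_mul_eq (f g : Poly2) (hf : f ≠ 0) (hg : g ≠ 0) :
    (f * g).totalDegree = f.totalDegree + g.totalDegree := by
  refine le_antisymm (totalDegree_mul f g) ?_
  set d := f.totalDegree with hd
  set e := g.totalDegree with he
  have hF : homogeneousComponent d f * homogeneousComponent e g ≠ 0 :=
    mul_ne_zero (hc_top_ne_zero f hf) (hc_top_ne_zero g hg)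
  obtain ⟨v, hv⟩ : ∃ v : Pt,
      MvPolynomial.eval v (homogeneousComponent d f * homogeneousComponent e g) ≠ 0 := by
    by_contra h
    push_neg at h
    exact hF (MvPolynomial.funext fun x => by simpa using h x)
  rw [map_mul] at hv
  have hv1 : MvPolynomial.eval v (homogeneousComponent d f) ≠ 0 := left_ne_zero_of_mul hv
  have hv2 : MvPolynomial.eval v (homogeneousComponent e g) ≠ 0 := right_ne_zero_of_mul hv
  have key : ∀ q : Poly2, Polynomial.natDegree (subst v q) ≤ q.totalDegree := fun q =>
    Polynomial.natDegree_le_iff_coeff_eq_zero.2 (fun k hk => by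
      rw [coeff_subst, homogeneousComponent_eq_zero _ _ hk, map_zero])
  have h1 : (subst v f).coeff d ≠ 0 := by rw [coeff_subst]; exact hv1
  have h2 : (subst v g).coeff e ≠ 0 := by rw [coeff_subst]; exact hv2
  have hf' : subst v f ≠ 0 := fun h => h1 (by rw [h, Polynomial.coeff_zero])
  have hg' : subst v g ≠ 0 := fun h => h2 (by rw [h, Polynomial.coeff_zero])
  have : d + e ≤ Polynomial.natDegree (subst v (f * g)) := by
    rw [map_mul, Polynomial.natDegree_mul hf' hg']
    exact add_le_add (Polynomial.le_natDegree_of_ne_zero h1)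
      (Polynomial.le_natDegree_of_ne_zero h2)
  exact this.trans (key (f * g))

def T (t : ℕ) : Finset (ℕ × ℕ) :=
  (Finset.range (t + 1)).biUnion (fun d => Finset.HasAntidiagonal.antidiagonal d)

lemma mem_T {t : ℕ} {p : ℕ × ℕ} : p ∈ T t ↔ p.1 + p.2 ≤ t := by
  simp only [T, Finset.mem_biUnion, Finset.mem_range, Finset.HasAntidiagonal.mem_antidiagonal]
  constructor
  · rintro ⟨d, hd, rfl⟩; omega
  · intro h; exact ⟨p.1 + p.2, by omega, rfl⟩

lemma card_T_s11 (t : ℕ) : 2 * (T t).card = (t + 1) * (t + 2) := by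
  rw [T, Finset.card_biUnion]
  · have h1 : ∀ d ∈ Finset.range (t + 1), (Finset.HasAntidiagonal.antidiagonal d).card = d + 1 := by
      intro d _; exact Finset.Nat.card_antidiagonal d
    rw [Finset.sum_congr rfl h1]
    have h2 : ∑ d ∈ Finset.range (t + 2), d = ∑ d ∈ Finset.range (t + 1), (d + 1) + 0 :=
      Finset.sum_range_succ' id (t + 1)
    have h3 := Finset.sum_range_id_mul_two (t + 2)
    rw [show t + 2 - 1 = t + 1 from rfl] at h3
    have h4 : (t + 1) * (t + 2) = (t + 2) * (t + 1) := by ring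
    linarith
  · intro a _ b _ hab
    simp only [Finset.disjoint_left, Finset.HasAntidiagonal.mem_antidiagonal]
    intro x h1 h2; exact hab (by omega)

def e2 (p : ℕ × ℕ) : Fin 2 →₀ ℕ := Finsupp.single 0 p.1 + Finsupp.single 1 p.2

lemma e2_apply0 (p : ℕ × ℕ) : e2 p 0 = p.1 := by
  simp [e2, Finsupp.single_apply]

lemma e2_apply1 (p : ℕ × ℕ) : e2 p 1 = p.2 := by
  simp [e2, Finsupp.single_apply]

lemma e2_inj : Function.Injective e2 := by
  intro p q h
  have h0 := congrArg (fun f => f 0) h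
  have h1 := congrArg (fun f => f 1) h
  simp only [e2_apply0, e2_apply1] at h0 h1
  exact Prod.ext h0 h1

lemma usum (u : Fin 2 →₀ ℕ) : (u.sum fun _ n => n) = u 0 + u 1 := by
  rw [Finsupp.sum_fintype]
  · exact Fin.sum_univ_two _
  · intro _; rfl

lemma e2_eval (u : Fin 2 →₀ ℕ) : e2 (u 0, u 1) = u := by
  ext i
  match i with
  | 0 => exact e2_apply0 _
  | 1 => exact e2_apply1 _

lemma sum_e2 (p : ℕ × ℕ) : ((e2 p).sum fun _ n => n) = p.1 + p.2 := by
  rw [usum, e2_apply0, e2_apply1]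

/-- linear map from coefficient vectors on `T t` to polynomials of degree ≤ t -/
def θ (t : ℕ) : (↥(T t) → ℂ) →ₗ[ℂ] Poly2 where
  toFun c := ∑ u : ↥(T t), monomial (e2 u.val) (c u)
  map_add' c d := by
    rw [← Finset.sum_add_distrib]
    exact Finset.sum_congr rfl fun u _ => by rw [Pi.add_apply, map_add]
  map_smul' r c := by
    rw [RingHom.id_apply, Finset.smul_sum]
    exact Finset.sum_congr rfl fun u _ => by rw [Pi.smul_apply, map_smul]

lemma coeff_θ (t : ℕ) (c : ↥(T t) → ℂ) (v : ↥(T t)) :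
    coeff (e2 v.val) (θ t c) = c v := by
  have : coeff (e2 v.val) (θ t c)
      = ∑ u : ↥(T t), coeff (e2 v.val) (monomial (e2 u.val) (c u)) := by
    rw [θ]
    simp only [LinearMap.coe_mk, AddHom.coe_mk]
    exact coeff_sum _ _ _
  rw [this]
  rw [Finset.sum_eq_single v]
  · rw [coeff_monomial, if_pos rfl]
  · intro b _ hb
    rw [coeff_monomial, if_neg]
    intro h
    exact hb (Subtype.ext (e2_inj h))
  · intro h; exact absurd (Finset.mem_univ v) h

lemma deg_θ (t : ℕ) (c : ↥(T t) → ℂ) : (θ t c).totalDegree ≤ t := by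
  apply totalDegree_finsetSum_le
  intro u _
  by_cases h : c u = 0
  · simp [h]
  · rw [totalDegree_monomial _ h, sum_e2]
    exact mem_T.mp u.prop

lemma recon (t : ℕ) (q : Poly2) (hq : q.totalDegree ≤ t) :
    θ t (fun v => coeff (e2 v.val) q) = q := by
  have h1 : θ t (fun v => coeff (e2 v.val) q)
      = ∑ p ∈ T t, monomial (e2 p) (coeff (e2 p) q) := by
    rw [θ]
    simp only [LinearMap.coe_mk, AddHom.coe_mk]
    exact Finset.sum_coe_sort (T t) (fun p => monomial (e2 p) (coeff (e2 p) q))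
  rw [h1]
  rw [← Finset.sum_image (f := fun w => monomial w (coeff w q))
    (g := e2) (fun x _ y _ h => e2_inj h)]
  have h3 : q.support ⊆ (T t).image e2 := by
    intro u hu
    rw [Finset.mem_image]
    refine ⟨(u 0, u 1), mem_T.mpr ?_, e2_eval u⟩
    have := le_totalDegree (p := q) hu
    rw [usum] at this
    omega
  have h4 : ∀ u ∈ (T t).image e2, u ∉ q.support → monomial u (coeff u q) = 0 := by
    intro u _ hu
    rw [notMem_support_iff.mp hu, map_zero]
  exact (Finset.sum_subset h3 h4).symm.trans (support_sum_monomial_coeff q)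

/-- a linear polynomial separating B from A -/
def sep (A B : Pt) : Poly2 :=
  if h : ∃ i, B i ≠ A i then X h.choose - C (B h.choose) else 1

lemma sep_deg (A B : Pt) : (sep A B).totalDegree ≤ 1 := by
  by_cases h : ∃ i, B i ≠ A i
  · rw [sep, dif_pos h]
    have h1 : (X h.choose - C (B h.choose) : Poly2)
        = X h.choose + C (-(B h.choose)) := by
      rw [map_neg, sub_eq_add_neg]
    rw [h1]
    refine (totalDegree_add _ _).trans ?_
    rw [totalDegree_X, totalDegree_C]
    omega
  · rw [sep, dif_neg h, show (1 : Poly2) = C 1 from rfl, totalDegree_C]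
    omega

lemma sep_eval_self (A B : Pt) (h : B ≠ A) : eval B (sep A B) = 0 := by
  rw [sep, dif_pos (Function.ne_iff.mp h)]
  simp

lemma sep_eval_other (A B : Pt) (h : B ≠ A) : eval A (sep A B) ≠ 0 := by
  have hex := Function.ne_iff.mp h
  rw [sep, dif_pos hex]
  simp only [map_sub, eval_X, eval_C]
  exact sub_ne_zero_of_ne (Ne.symm hex.choose_spec)

/-- interpolation polynomial at A w.r.t. S -/
def interp (S : Finset Pt) (A : Pt) : Poly2 := ∏ B ∈ S.erase A, sep A B

lemma interp_deg (S : Finset Pt) (A : Pt) : (interp S A).totalDegree ≤ S.card := by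
  refine (totalDegree_finset_prod _ _).trans ?_
  calc ∑ B ∈ S.erase A, (sep A B).totalDegree ≤ ∑ B ∈ S.erase A, 1 :=
        Finset.sum_le_sum (fun B _ => sep_deg A B)
    _ = (S.erase A).card := by rw [Finset.sum_const, smul_eq_mul, mul_one]
    _ ≤ S.card := Finset.card_le_card (Finset.erase_subset _ _)

lemma interp_self (S : Finset Pt) (A : Pt) : eval A (interp S A) ≠ 0 := by
  rw [interp, map_prod]
  rw [Finset.prod_ne_zero_iff]
  intro B hB
  exact sep_eval_other A B (Finset.ne_of_mem_erase hB)

lemma interp_other (S : Finset Pt) (A B : Pt) (hB : B ∈ S) (hBA : B ≠ A) :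
    eval B (interp S A) = 0 := by
  rw [interp, map_prod]
  exact Finset.prod_eq_zero (Finset.mem_erase.mpr ⟨hBA, hB⟩) (sep_eval_self A B hBA)

/-- coefficient-vector extraction -/
def coeffvec (t : ℕ) : Poly2 →ₗ[ℂ] (↥(T t) → ℂ) where
  toFun q := fun v => coeff (e2 v.val) q
  map_add' q r := by funext v; simp [coeff_add]
  map_smul' c q := by
    funext v
    simp only [RingHom.id_apply, Pi.smul_apply]
    exact coeff_smul _ _ _

lemma bezout (f g : Poly2) (hf : f ≠ 0) (hg : g ≠ 0) (hco : IsRelPrime f g)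
    (S : Finset Pt) (hS : ∀ x ∈ S, eval x f = 0 ∧ eval x g = 0) :
    S.card ≤ f.totalDegree * g.totalDegree := by
  classical
  set a := f.totalDegree with ha
  set b := g.totalDegree with hb
  set k := S.card with hk
  set s := a + b + k with hs
  -- the big linear map
  set Ψ : ((↥(T (b + k)) → ℂ) × (↥(T (a + k)) → ℂ) × (↥S → ℂ)) →ₗ[ℂ] Poly2 :=
    (LinearMap.mulRight ℂ f).comp ((θ (b + k)).comp (LinearMap.fst ℂ _ _))
    + (LinearMap.mulRight ℂ g).comp ((θ (a + k)).comp
        ((LinearMap.fst ℂ _ _).comp (LinearMap.snd ℂ _ _)))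
    + (Fintype.linearCombination ℂ (fun A : ↥S => interp S A.val)).comp
        ((LinearMap.snd ℂ _ _).comp (LinearMap.snd ℂ _ _)) with hΨ
  have Ψ_apply : ∀ x : ((↥(T (b + k)) → ℂ) × (↥(T (a + k)) → ℂ) × (↥S → ℂ)), Ψ x = θ (b + k) x.1 * f + θ (a + k) x.2.1 * g
      + ∑ A : ↥S, x.2.2 A • interp S A.val := by
    intro x
    simp [hΨ, Fintype.linearCombination_apply, LinearMap.mulRight_apply,
      LinearMap.add_apply, LinearMap.comp_apply, LinearMap.fst_apply, LinearMap.snd_apply]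
  -- range bound
  have hrange : LinearMap.range Ψ ≤ LinearMap.range (θ s) := by
    rintro q ⟨x, rfl⟩
    have hdeg : (Ψ x).totalDegree ≤ s := by
      rw [Ψ_apply]
      refine (totalDegree_add _ _).trans (max_le ((totalDegree_add _ _).trans (max_le ?_ ?_)) ?_)
      · exact (totalDegree_mul _ _).trans (by
          have := deg_θ (b + k) x.1; omega)
      · exact (totalDegree_mul _ _).trans (by
          have := deg_θ (a + k) x.2.1; omega)
      · refine totalDegree_finsetSum_le (fun A _ => ?_)
        refine (totalDegree_smul_le _ _).trans ((interp_deg S A.val).trans ?_)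
        omega
    exact ⟨_, recon s _ hdeg⟩
  -- kernel bound
  set ι : (↥(T k) → ℂ) →ₗ[ℂ] ((↥(T (b + k)) → ℂ) × (↥(T (a + k)) → ℂ) × (↥S → ℂ)) :=
    LinearMap.prod ((coeffvec (b + k)).comp ((LinearMap.mulRight ℂ g).comp (θ k)))
      (LinearMap.prod (-((coeffvec (a + k)).comp ((LinearMap.mulRight ℂ f).comp (θ k)))) 0)
    with hι
  have hker : LinearMap.ker Ψ ≤ LinearMap.range ι := by
    rintro ⟨c1, c2, c3⟩ hx
    have hx0 : θ (b + k) c1 * f + θ (a + k) c2 * g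
        + ∑ A : ↥S, c3 A • interp S A.val = 0 := by
      have := Ψ_apply (c1, c2, c3)
      rw [LinearMap.mem_ker] at hx
      rw [hx] at this
      exact this.symm
    -- c3 = 0
    have hc3 : c3 = 0 := by
      funext A
      have hev := congrArg (eval A.val) hx0
      rw [map_add, map_add, map_mul, map_mul, (hS A.val A.prop).1, (hS A.val A.prop).2,
        mul_zero, mul_zero, zero_add, zero_add, map_zero, map_sum] at hev
      rw [Finset.sum_eq_single A] at hev
      · simp only [smul_eq_C_mul] at hev
        rw [map_mul, eval_C] at hev
        have := interp_self S A.val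
        exact (mul_eq_zero.mp hev).resolve_right this
      · intro B _ hBA
        simp only [smul_eq_C_mul, map_mul, eval_C]
        rw [interp_other S B.val A.val A.prop (fun h => hBA (Subtype.ext h).symm), mul_zero]
      · intro h; exact absurd (Finset.mem_univ A) h
    rw [hc3] at hx0
    simp only [Pi.zero_apply, zero_smul, Finset.sum_const_zero, add_zero] at hx0
    -- Koszul
    by_cases h1 : θ (b + k) c1 = 0
    · have h2 : θ (a + k) c2 = 0 := by
        rw [h1, zero_mul, zero_add] at hx0
        rcases mul_eq_zero.mp hx0 with h | h
        · exact h
        · exact absurd h hg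
      refine ⟨0, ?_⟩
      rw [map_zero]
      refine Prod.ext ?_ (Prod.ext ?_ ?_)
      · funext v
        have := coeff_θ (b + k) c1 v
        rw [h1, coeff_zero] at this
        exact this
      · funext v
        have := coeff_θ (a + k) c2 v
        rw [h2, coeff_zero] at this
        exact this
      · exact hc3.symm
    · have hdvd : g ∣ θ (b + k) c1 := by
        refine hco.symm.dvd_of_dvd_mul_right (y := θ (b + k) c1) ?_
        exact ⟨-(θ (a + k) c2), by linear_combination hx0⟩
      obtain ⟨c, hc⟩ := hdvd
      have hcne : c ≠ 0 := fun h => h1 (by rw [hc, h, mul_zero])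
      have hcdeg : c.totalDegree ≤ k := by
        have h3 : (g * c).totalDegree = b + c.totalDegree := totalDegree_mul_eq g c hg hcne
        have h4 : (g * c).totalDegree ≤ b + k := hc ▸ deg_θ (b + k) c1
        omega
      refine ⟨coeffvec k c, ?_⟩
      have hrec : θ k (coeffvec k c) = c := recon k c hcdeg
      have hth2 : θ (a + k) c2 = -(c * f) := by
        have h5 : g * (c * f + θ (a + k) c2) = 0 := by
          rw [hc] at hx0
          linear_combination hx0
        rcases mul_eq_zero.mp h5 with h | h
        · exact absurd h hg
        · linear_combination h
      rw [hι]
      refine Prod.ext ?_ (Prod.ext ?_ ?_)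
      · show coeffvec (b + k) (θ k (coeffvec k c) * g) = c1
        rw [hrec]
        funext v
        show coeff (e2 v.val) (c * g) = c1 v
        rw [← coeff_θ (b + k) c1 v, hc, mul_comm]
      · show -(coeffvec (a + k) (θ k (coeffvec k c) * f)) = c2
        rw [hrec]
        funext v
        show -(coeff (e2 v.val) (c * f)) = c2 v
        rw [← coeff_θ (a + k) c2 v, hth2, coeff_neg]
      · exact hc3.symm
  -- dimension counting
  have hrk : Module.finrank ℂ (LinearMap.range Ψ) + Module.finrank ℂ (LinearMap.ker Ψ)
      = (T (b + k)).card + ((T (a + k)).card + k) := by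
    rw [LinearMap.finrank_range_add_finrank_ker Ψ]
    rw [Module.finrank_prod, Module.finrank_prod, Module.finrank_pi, Module.finrank_pi,
      Module.finrank_pi, Fintype.card_coe, Fintype.card_coe, Fintype.card_coe]
  have hr1 : Module.finrank ℂ (LinearMap.range Ψ) ≤ (T s).card := by
    refine (Submodule.finrank_mono hrange).trans ?_
    refine (LinearMap.finrank_range_le (θ s)).trans_eq ?_
    rw [Module.finrank_pi, Fintype.card_coe]
  have hr2 : Module.finrank ℂ (LinearMap.ker Ψ) ≤ (T k).card := by
    refine (Submodule.finrank_mono hker).trans ?_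
    refine (LinearMap.finrank_range_le ι).trans_eq ?_
    rw [Module.finrank_pi, Fintype.card_coe]
  have key : (T (b + k)).card + ((T (a + k)).card + k) ≤ (T s).card + (T k).card := by
    omega
  -- arithmetic
  have c1 := card_T_s11 (b + k)
  have c2 := card_T_s11 (a + k)
  have c3 := card_T_s11 s
  have c4 := card_T_s11 k
  rw [hs] at c3
  nlinarith [key, c1, c2, c3, c4]

lemma eq_C_of_totalDegree_eq_zero (q : Poly2) (h : q.totalDegree = 0) :
    q = C (coeff 0 q) := by
  apply MvPolynomial.ext
  intro u
  by_cases hu : u = 0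
  · subst hu; rw [coeff_zero_C]
  · rw [coeff_C, if_neg (fun hh => hu hh.symm)]
    by_contra hc
    have hmem : u ∈ q.support := mem_support_iff.mpr hc
    have := le_totalDegree (p := q) hmem
    rw [h, usum] at this
    have h0 : u 0 = 0 := by omega
    have h1 : u 1 = 0 := by omega
    apply hu
    ext i
    match i with
    | 0 => exact h0
    | 1 => exact h1


end AuxiliaryBezout

theorem stmt11 (m n : ℕ) (hmn : m ≤ n) (σm σn : Poly2)
    (hdm : σm.totalDegree = m) (hdn : σn.totalDegree = n)
    (hcop : ∀ d : Poly2, d ∣ σm → d ∣ σn → IsUnit d)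
    (X : Finset Pt) (hX : ∀ x, x ∈ X ↔ (eval x σm = 0 ∧ eval x σn = 0))
    (hcard : X.card = m * n) :
    ∀ p : Poly2, p ≠ 0 → p.totalDegree < m → ∃ x ∈ X, eval x p ≠ 0 := by
  classical
  intro p hp0 hpm
  by_contra hcon
  push_neg at hcon
  have hm1 : 1 ≤ m := by omega
  have hn1 : 1 ≤ n := le_trans hm1 hmn
  have hσm0 : σm ≠ 0 := by intro h; rw [h, totalDegree_zero] at hdm; omega
  have hσn0 : σn ≠ 0 := by intro h; rw [h, totalDegree_zero] at hdn; omega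
  have key : ∀ d : ℕ, ∀ q : Poly2, q ≠ 0 → q.totalDegree ≤ d →
      (X.filter (fun x => eval x q = 0)).card ≤ q.totalDegree * n := by
    intro d
    induction d with
    | zero =>
      intro q hq hqd
      have hq0 : q.totalDegree = 0 := Nat.le_zero.mp hqd
      have hC := eq_C_of_totalDegree_eq_zero q hq0
      have hc0 : coeff 0 q ≠ 0 := by
        intro h
        rw [h, map_zero] at hC
        exact hq hC
      have hempty : X.filter (fun x => eval x q = 0) = ∅ := by
        rw [Finset.filter_eq_empty_iff]
        intro x _
        rw [hC]
        simpa using hc0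
      rw [hempty]
      simp
    | succ d ih =>
      intro q hq hqd
      by_cases hle : q.totalDegree ≤ d
      · exact ih q hq hle
      by_cases hco : IsRelPrime q σn
      · have hb := bezout q σn hq hσn0 hco (X.filter (fun x => eval x q = 0))
          (fun x hx => ⟨(Finset.mem_filter.mp hx).2,
            ((hX x).mp (Finset.mem_filter.mp hx).1).2⟩)
        rw [hdn] at hb
        exact hb
      · obtain ⟨h, hdq, hdn', hu⟩ : ∃ h : Poly2, h ∣ q ∧ h ∣ σn ∧ ¬IsUnit h := by
          rw [IsRelPrime] at hco
          push_neg at hco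
          obtain ⟨z, h1, h2, h3⟩ := hco
          exact ⟨z, h1, h2, h3⟩
        have hh0 : h ≠ 0 := by
          rintro rfl
          exact hq (zero_dvd_iff.mp hdq)
        have hh1 : 1 ≤ h.totalDegree := by
          by_contra hh
          push_neg at hh
          have h0 : h.totalDegree = 0 := by omega
          have hC := eq_C_of_totalDegree_eq_zero h h0
          have hc0 : coeff 0 h ≠ 0 := by
            intro hcc
            rw [hcc, map_zero] at hC
            exact hh0 hC
          exact hu (hC ▸ (isUnit_iff_ne_zero.mpr hc0).map (C : ℂ →+* Poly2))
        obtain ⟨q1, rfl⟩ := hdq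
        have hq10 : q1 ≠ 0 := right_ne_zero_of_mul hq
        have hdeg : (h * q1).totalDegree = h.totalDegree + q1.totalDegree :=
          totalDegree_mul_eq h q1 hh0 hq10
        have hcom : IsRelPrime h σm := fun z hz1 hz2 => hcop z hz2 (hz1.trans hdn')
        have b1 : (X.filter (fun x => eval x h = 0)).card ≤ h.totalDegree * m := by
          have hb := bezout h σm hh0 hσm0 hcom (X.filter (fun x => eval x h = 0))
            (fun x hx => ⟨(Finset.mem_filter.mp hx).2,
              ((hX x).mp (Finset.mem_filter.mp hx).1).1⟩)
          rw [hdm] at hb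
          exact hb
        have b2 : (X.filter (fun x => eval x q1 = 0)).card ≤ q1.totalDegree * n :=
          ih q1 hq10 (by omega)
        have hsub : X.filter (fun x => eval x (h * q1) = 0)
            ⊆ X.filter (fun x => eval x h = 0) ∪ X.filter (fun x => eval x q1 = 0) := by
          intro x hx
          obtain ⟨hx1, hx2⟩ := Finset.mem_filter.mp hx
          rw [map_mul] at hx2
          rcases mul_eq_zero.mp hx2 with hz | hz
          · exact Finset.mem_union_left _ (Finset.mem_filter.mpr ⟨hx1, hz⟩)
          · exact Finset.mem_union_right _ (Finset.mem_filter.mpr ⟨hx1, hz⟩)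
        calc (X.filter (fun x => eval x (h * q1) = 0)).card
            ≤ (X.filter (fun x => eval x h = 0) ∪ X.filter (fun x => eval x q1 = 0)).card :=
              Finset.card_le_card hsub
          _ ≤ (X.filter (fun x => eval x h = 0)).card
              + (X.filter (fun x => eval x q1 = 0)).card := Finset.card_union_le _ _
          _ ≤ h.totalDegree * m + q1.totalDegree * n := Nat.add_le_add b1 b2
          _ ≤ h.totalDegree * n + q1.totalDegree * n :=
              Nat.add_le_add_right (Nat.mul_le_mul_left _ hmn) _
          _ = (h.totalDegree + q1.totalDegree) * n := (Nat.add_mul _ _ _).symm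
          _ = (h * q1).totalDegree * n := by rw [hdeg]
  have hXfull : X.filter (fun x => eval x p = 0) = X := Finset.filter_true_of_mem hcon
  have hfin := key p.totalDegree p hp0 le_rfl
  rw [hXfull, hcard] at hfin
  have hlt : p.totalDegree * n < m * n := Nat.mul_lt_mul_of_lt_of_le hpm le_rfl hn1
  omega
end

section
/- Let X ⊂ ℂ² with #X = n be essentially (n−2)-dependent, i.e., every polynomial of degree ≤ n−2 vanishing at all but one point of X vanishes on all of X. Then the n points of X are collinear, and X is the intersection of a line with a curve of degree n. -/
open MvPolynomial

lemma aux_tdeg_sub_le (p q : Poly2) : (p - q).totalDegree ≤ max p.totalDegree q.totalDegree := by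
  rw [sub_eq_add_neg]
  exact (totalDegree_add _ _).trans (by rw [totalDegree_neg])

lemma aux_tdeg_X_sub_C (i : Fin 2) (c : ℂ) : (X i - C c : Poly2).totalDegree ≤ 1 := by
  refine (aux_tdeg_sub_le _ _).trans ?_
  simp [totalDegree_X, totalDegree_C]

lemma aux_lin_deg_le (a b c : ℂ) :
    (C a * X 0 + C b * X 1 + C c : Poly2).totalDegree ≤ 1 := by
  refine (totalDegree_add _ _).trans (max_le ((totalDegree_add _ _).trans (max_le ?_ ?_)) ?_)
  · exact (totalDegree_mul _ _).trans (by simp)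
  · exact (totalDegree_mul _ _).trans (by simp)
  · simp

lemma aux_lin_deg (a b c : ℂ) (h : a ≠ 0 ∨ b ≠ 0) :
    (C a * X 0 + C b * X 1 + C c : Poly2).totalDegree = 1 := by
  classical
  refine le_antisymm (aux_lin_deg_le a b c) ?_
  rcases h with h | h
  · have hc : coeff (Finsupp.single 0 1) (C a * X 0 + C b * X 1 + C c : Poly2) = a := by
      simp [coeff_add, coeff_C_mul, coeff_X', coeff_C, Finsupp.single_eq_single_iff,
        Finsupp.single_eq_zero]
      intro h'
      exact absurd h'.symm (by simp)
    have hmem : Finsupp.single (0 : Fin 2) 1 ∈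
        (C a * X 0 + C b * X 1 + C c : Poly2).support := by
      rw [mem_support_iff, hc]; exact h
    simpa using le_totalDegree hmem
  · have hc : coeff (Finsupp.single 1 1) (C a * X 0 + C b * X 1 + C c : Poly2) = b := by
      simp [coeff_add, coeff_C_mul, coeff_X', coeff_C, Finsupp.single_eq_single_iff,
        Finsupp.single_eq_zero]
      intro h'
      exact absurd h'.symm (by simp)
    have hmem : Finsupp.single (1 : Fin 2) 1 ∈
        (C a * X 0 + C b * X 1 + C c : Poly2).support := by
      rw [mem_support_iff, hc]; exact h
    simpa using le_totalDegree hmem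

lemma aux_prod_deg_le (i : Fin 2) (s : Finset Pt) (f : Pt → ℂ) :
    (∏ A ∈ s, (X i - C (f A) : Poly2)).totalDegree ≤ s.card := by
  refine (totalDegree_finset_prod _ _).trans ?_
  calc ∑ A ∈ s, (X i - C (f A) : Poly2).totalDegree ≤ ∑ _A ∈ s, 1 :=
        Finset.sum_le_sum fun A _ => aux_tdeg_X_sub_C i (f A)
    _ = s.card := by simp

lemma aux_prod_coeff (i : Fin 2) (s : Finset Pt) (f : Pt → ℂ) :
    coeff (Finsupp.single i s.card) (∏ A ∈ s, (X i - C (f A) : Poly2)) = 1 := by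
  classical
  induction s using Finset.induction_on with
  | empty => simp
  | insert a s ha ih =>
    rw [Finset.prod_insert ha, Finset.card_insert_of_notMem ha, sub_mul, coeff_sub]
    have h1 : coeff (Finsupp.single i (s.card + 1))
        (X i * ∏ A ∈ s, (X i - C (f A) : Poly2)) = 1 := by
      have hm : Finsupp.single i (s.card + 1)
          = Finsupp.single i 1 + Finsupp.single i s.card := by
        rw [← Finsupp.single_add, add_comm]
      rw [hm, coeff_X_mul, ih]
    have h2 : coeff (Finsupp.single i (s.card + 1))
        (C (f a) * ∏ A ∈ s, (X i - C (f A) : Poly2)) = 0 := by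
      rw [coeff_C_mul]
      have : coeff (Finsupp.single i (s.card + 1))
          (∏ A ∈ s, (X i - C (f A) : Poly2)) = 0 := by
        apply coeff_eq_zero_of_totalDegree_lt
        have hsum : ∑ j ∈ (Finsupp.single i (s.card + 1)).support,
            (Finsupp.single i (s.card + 1)) j = s.card + 1 := by
          rw [Finsupp.support_single_ne_zero _ (by omega), Finset.sum_singleton,
            Finsupp.single_eq_same]
        rw [hsum]
        exact lt_of_le_of_lt (aux_prod_deg_le i s f) (by omega)
      rw [this, mul_zero]
    rw [h1, h2, sub_zero]

lemma aux_prod_deg (i : Fin 2) (s : Finset Pt) (f : Pt → ℂ) :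
    (∏ A ∈ s, (X i - C (f A) : Poly2)).totalDegree = s.card := by
  refine le_antisymm (aux_prod_deg_le i s f) ?_
  have hmem : Finsupp.single i s.card ∈ (∏ A ∈ s, (X i - C (f A) : Poly2)).support := by
    rw [mem_support_iff, aux_prod_coeff]; exact one_ne_zero
  simpa using le_totalDegree hmem

lemma aux_line_param (v : Pt) (i : Fin 2) (hvi : v i ≠ 0) (u : Pt)
    (h : u 0 * v 1 = u 1 * v 0) : u = (u i / v i) • v := by
  funext j
  rw [Pi.smul_apply, smul_eq_mul, div_mul_eq_mul_div, eq_div_iff hvi]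
  fin_cases i <;> fin_cases j <;> simp only [Fin.mk_zero, Fin.mk_one] <;>
    first | rfl | linear_combination h | linear_combination -h

lemma aux_collinear (n : ℕ) (S : Finset Pt) (hcard : S.card = n)
    (hdep : EssDep (n - 2) S) : Collinear ℂ (S : Set Pt) := by
  classical
  by_contra hnc
  have hne : S.Nonempty := by
    by_contra h
    rw [Finset.not_nonempty_iff_eq_empty] at h
    exact hnc (by simp [h, collinear_empty])
  obtain ⟨P, hP⟩ := hne
  have hQ : ∃ Q ∈ S, Q ≠ P := by
    by_contra h
    push_neg at h
    refine hnc (Collinear.subset ?_ (collinear_singleton ℂ P))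
    intro b hb
    exact Set.mem_singleton_iff.mpr (h b (by exact_mod_cast hb))
  obtain ⟨Q, hQS, hQP⟩ := hQ
  have hR : ∃ R ∈ S, (R 0 - P 0) * (Q 1 - P 1) - (R 1 - P 1) * (Q 0 - P 0) ≠ 0 := by
    by_contra h
    push_neg at h
    apply hnc
    rw [collinear_iff_of_mem (show P ∈ (S : Set Pt) from hP)]
    refine ⟨Q - P, ?_⟩
    intro x hx
    have hx' : x ∈ S := by exact_mod_cast hx
    have hdet := h x hx'
    have hvne : ∃ i, (Q - P : Pt) i ≠ 0 := by
      by_contra hv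
      push_neg at hv
      apply hQP
      funext j
      have := hv j
      simp [Pi.sub_apply, sub_eq_zero] at this
      exact this
    obtain ⟨i, hvi⟩ := hvne
    have hpar : (x - P : Pt) = (((x - P : Pt) i) / (Q - P : Pt) i) • (Q - P : Pt) := by
      apply aux_line_param _ _ hvi
      simp only [Pi.sub_apply]
      linear_combination hdet
    refine ⟨((x - P : Pt) i) / (Q - P : Pt) i, ?_⟩
    rw [vadd_eq_add, ← hpar]
    funext j
    simp
  obtain ⟨R, hRS, hRdet⟩ := hR
  have hRP : R ≠ P := by
    rintro rfl
    apply hRdet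
    ring
  have hRQ : R ≠ Q := by
    rintro rfl
    apply hRdet
    ring
  have hPQ : P ≠ Q := hQP.symm ∘ Eq.symm ∘ Eq.symm
  have hsub : ({R, P, Q} : Finset Pt) ⊆ S := by
    intro x hx
    simp only [Finset.mem_insert, Finset.mem_singleton] at hx
    rcases hx with rfl | rfl | rfl <;> assumption
  have hcard3 : ({R, P, Q} : Finset Pt).card = 3 := by
    rw [Finset.card_insert_of_notMem (by simp [hRP, hRQ]),
      Finset.card_insert_of_notMem (by simp [hQP.symm]), Finset.card_singleton]
  have hn3 : 3 ≤ n := by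
    calc 3 = ({R, P, Q} : Finset Pt).card := hcard3.symm
      _ ≤ S.card := Finset.card_le_card hsub
      _ = n := hcard
  set T : Finset Pt := S \ {R, P, Q} with hT
  have hTcard : T.card = n - 3 := by
    rw [hT, Finset.card_sdiff_of_subset hsub, hcard, hcard3]
  set lpq : Poly2 := C (Q 1 - P 1) * X 0 + C (-(Q 0 - P 0)) * X 1 +
      C (P 1 * (Q 0 - P 0) - P 0 * (Q 1 - P 1)) with hlpq
  have hlpq_eval : ∀ x : Pt,
      eval x lpq = (x 0 - P 0) * (Q 1 - P 1) - (x 1 - P 1) * (Q 0 - P 0) := by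
    intro x
    simp only [hlpq, map_add, map_mul, eval_C, eval_X]
    ring
  set g : Pt → Poly2 := fun D => if R 0 = D 0 then X 1 - C (D 1) else X 0 - C (D 0) with hg
  have hg_deg : ∀ D, (g D).totalDegree ≤ 1 := by
    intro D
    by_cases h : R 0 = D 0 <;> simp only [hg, h, if_true, if_false, reduceIte] <;>
      exact aux_tdeg_X_sub_C _ _
  have hg_self : ∀ D, eval D (g D) = 0 := by
    intro D
    by_cases h : R 0 = D 0 <;> simp [hg, h]
  have hg_R : ∀ D, D ≠ R → eval R (g D) ≠ 0 := by
    intro D hD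
    by_cases h : R 0 = D 0
    · simp only [hg, h, if_true, reduceIte, map_sub, eval_X, eval_C]
      rw [sub_ne_zero]
      intro h1
      apply hD
      funext j
      fin_cases j
      · exact h.symm
      · exact h1.symm
    · simp only [hg, h, if_false, reduceIte, map_sub, eval_X, eval_C]
      rw [sub_ne_zero]
      exact h
  set p : Poly2 := lpq * ∏ D ∈ T, g D with hp
  have hpdeg : p.totalDegree ≤ n - 2 := by
    refine (totalDegree_mul _ _).trans ?_
    have h1 : lpq.totalDegree ≤ 1 := aux_lin_deg_le _ _ _
    have h2 : (∏ D ∈ T, g D).totalDegree ≤ T.card := by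
      refine (totalDegree_finset_prod _ _).trans ?_
      calc ∑ D ∈ T, (g D).totalDegree ≤ ∑ _D ∈ T, 1 := Finset.sum_le_sum fun D _ => hg_deg D
        _ = T.card := by simp
    omega
  have hvanish : ∀ x ∈ S, x ≠ R → eval x p = 0 := by
    intro x hx hxR
    rw [hp, map_mul]
    by_cases hxT : x ∈ T
    · rw [map_prod]
      rw [Finset.prod_eq_zero hxT (hg_self x), mul_zero]
    · have : x = P ∨ x = Q := by
        rw [hT, Finset.mem_sdiff] at hxT
        push_neg at hxT
        have := hxT hx
        simp only [Finset.mem_insert, Finset.mem_singleton] at this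
        tauto
      rcases this with rfl | rfl <;> rw [hlpq_eval] <;> ring
  have hfinal := hdep R hRS p hpdeg hvanish
  rw [hp, map_mul] at hfinal
  rcases mul_eq_zero.mp hfinal with h | h
  · rw [hlpq_eval] at h
    exact hRdet h
  · rw [map_prod] at h
    obtain ⟨D, hD, hD0⟩ := Finset.prod_eq_zero_iff.mp h
    have hDR : D ≠ R := by
      rw [hT, Finset.mem_sdiff] at hD
      simp only [Finset.mem_insert, Finset.mem_singleton] at hD
      tauto
    exact hg_R D hDR hD0

theorem stmt12 (n : ℕ) (X : Finset Pt) (hcard : X.card = n)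
    (hdep : EssDep (n - 2) X) :
    Collinear ℂ (X : Set Pt) ∧
      ∃ l q : Poly2, l.totalDegree = 1 ∧ q.totalDegree = n ∧
        ∀ x, x ∈ X ↔ (eval x l = 0 ∧ eval x q = 0) := by
  classical
  have hcol : Collinear ℂ (X : Set Pt) := aux_collinear n X hcard hdep
  refine ⟨hcol, ?_⟩
  by_cases h0 : n = 0
  · subst h0
    rw [Finset.card_eq_zero] at hcard
    refine ⟨MvPolynomial.X 0, 1, totalDegree_X 0, totalDegree_one, ?_⟩
    intro x
    simp [hcard]
  by_cases h1 : n = 1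
  · exfalso
    subst h1
    rw [Finset.card_eq_one] at hcard
    obtain ⟨A, rfl⟩ := hcard
    have := hdep A (Finset.mem_singleton_self A) 1 (by simp) (by
      intro x hx hxA
      rw [Finset.mem_singleton] at hx
      exact absurd hx hxA)
    simp at this
  have h2 : 1 < X.card := by omega
  obtain ⟨P, hP, Q, hQ, hPQ⟩ := Finset.one_lt_card.mp h2
  obtain ⟨v, hv⟩ := (collinear_iff_of_mem (show P ∈ (X : Set Pt) from hP)).mp hcol
  obtain ⟨rQ, hrQ⟩ := hv Q hQ
  have hvne : ∃ i, v i ≠ 0 := by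
    by_contra h
    push_neg at h
    apply hPQ
    have : v = 0 := funext h
    rw [this, smul_zero, vadd_eq_add, zero_add] at hrQ
    exact hrQ.symm
  obtain ⟨i, hvi⟩ := hvne
  set l : Poly2 := C (v 1) * MvPolynomial.X 0 + C (-(v 0)) * MvPolynomial.X 1 +
      C (P 1 * v 0 - P 0 * v 1) with hl
  have hleval : ∀ x : Pt, eval x l = (x 0 - P 0) * v 1 - (x 1 - P 1) * v 0 := by
    intro x
    simp only [hl, map_add, map_mul, eval_C, eval_X]
    ring
  have hldeg : l.totalDegree = 1 := by
    refine aux_lin_deg _ _ _ ?_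
    fin_cases i
    · exact Or.inr (neg_ne_zero.mpr hvi)
    · exact Or.inl hvi
  set q : Poly2 := ∏ A ∈ X, (MvPolynomial.X i - C (A i)) with hq
  have hqdeg : q.totalDegree = n := by
    rw [hq, aux_prod_deg i X (fun A => A i), hcard]
  refine ⟨l, q, hldeg, hqdeg, fun x => ⟨?_, ?_⟩⟩
  · intro hx
    obtain ⟨r, hr⟩ := hv x hx
    rw [vadd_eq_add] at hr
    constructor
    · rw [hleval, hr]
      simp only [Pi.add_apply, Pi.smul_apply, smul_eq_mul]
      ring
    · rw [hq, map_prod]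
      exact Finset.prod_eq_zero hx (by simp)
  · rintro ⟨hxl, hxq⟩
    rw [hq, map_prod] at hxq
    obtain ⟨A, hA, hA0⟩ := Finset.prod_eq_zero_iff.mp hxq
    have hxi : x i = A i := by
      simpa [sub_eq_zero] using hA0
    obtain ⟨rA, hrA⟩ := hv A hA
    rw [vadd_eq_add] at hrA
    have hAP : (A - P : Pt) = rA • v := by
      rw [hrA]
      funext j
      simp
    have hline : (x - P : Pt) = (((x - P : Pt) i) / v i) • v := by
      apply aux_line_param v i hvi
      rw [hleval] at hxl
      simp only [Pi.sub_apply]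
      linear_combination hxl
    have hcoef : ((x - P : Pt) i) / v i = rA := by
      have h1 : (x - P : Pt) i = rA * v i := by
        rw [Pi.sub_apply, hxi, ← Pi.sub_apply A P, hAP, Pi.smul_apply, smul_eq_mul]
      rw [h1, mul_div_assoc, div_self hvi, mul_one]
    have hxA : x = A := by
      have h := hline
      rw [hcoef, ← hAP] at h
      exact sub_left_inj.mp h
    rw [hxA]
    exact hA
end

section
/- Let m ≤ n. If a set X ⊂ ℂ² with #X ≤ mn is essentially (m+n−3)-dependent, then all points of X lie on a curve of degree m or on a curve of degree n−3. -/
open MvPolynomial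

open Module

/-!
If `X` is not on a curve of degree `m`, take a minimal subset `Y ⊆ X` not on such a curve; each
point of `Y` then has an `m`-fundamental polynomial with respect to `Y`. Polynomials of degree
`≤ d` in two variables form a space of dimension `(d+1)(d+2)/2`, so `Y` has at least
`(m+1)(m+2)/2` points and `X \ Y` fewer than `mn - (m+1)(m+2)/2 < (n-2)(n-1)/2` points; hence
`X \ Y` lies on a curve `q` of degree `n - 3`. For `A ∈ Y` with fundamental polynomial `p`, the
product `p q` has degree `≤ m + n - 3` and vanishes on `X \ {A}`, so essential dependence gives
`p(A) q(A) = 0`, i.e. `q(A) = 0`.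
-/

variable {σ K : Type*}

theorem Finsupp.natCard_setOf_sum_le [Fintype σ] (d : ℕ) :
    Nat.card {s : σ →₀ ℕ | (s.sum fun _ e => e) ≤ d} =
      (d + Fintype.card σ).choose (Fintype.card σ) := by
  classical
  have hset : {s : σ →₀ ℕ | (s.sum fun _ e => e) ≤ d} =
      ↑((Finset.range (d + 1)).biUnion fun k => (Finset.univ : Finset σ).finsuppAntidiag k) := by
    ext s
    simp [Finsupp.sum_fintype]
  rw [hset, Nat.card_coe_set_eq, Set.ncard_coe_finset, Finset.card_biUnion]
  · simp_rw [Finset.card_finsuppAntidiag_nat_eq_multichoose, Finset.card_univ]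
    exact Nat.sum_range_multichoose d _
  · intro i _ j _ hij
    rw [Function.onFun, Finset.disjoint_left]
    intro s hi hj
    simp only [Finset.mem_finsuppAntidiag] at hi hj
    exact hij (hi.1.symm.trans hj.1)

theorem MvPolynomial.finrank_restrictTotalDegree [CommRing K] [Nontrivial K] [Fintype σ]
    (d : ℕ) :
    finrank K (restrictTotalDegree σ K d) = (d + Fintype.card σ).choose (Fintype.card σ) :=
  (finrank_eq_nat_card_basis (basisRestrictSupport K _)).trans (Finsupp.natCard_setOf_sum_le d)

theorem MvPolynomial.two_mul_finrank_restrictTotalDegree_fin_two [CommRing K] [Nontrivial K]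
    (d : ℕ) :
    2 * finrank K (restrictTotalDegree (Fin 2) K d) = (d + 1) * (d + 2) := by
  rw [finrank_restrictTotalDegree, Fintype.card_fin, mul_comm,
    ← Nat.add_one_mul_choose_eq (d + 1) 1, Nat.choose_one_right, mul_comm]

def LiesOnCurve [CommRing K] (d : ℕ) (S : Finset (σ → K)) : Prop :=
  ∃ p : MvPolynomial σ K, p ≠ 0 ∧ p.totalDegree ≤ d ∧ ∀ x ∈ S, eval x p = 0

theorem liesOnCurve_of_card_lt [Field K] [Finite σ] {d : ℕ} {S : Finset (σ → K)}
    (h : S.card < finrank K (restrictTotalDegree σ K d)) : LiesOnCurve d S := by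
  let ev : restrictTotalDegree σ K d →ₗ[K] (S → K) :=
    LinearMap.pi fun x => (aeval x.1).toLinearMap ∘ₗ (restrictTotalDegree σ K d).subtype
  have hdim : finrank K (S → K) < finrank K (restrictTotalDegree σ K d) := by
    rwa [finrank_fintype_fun_eq_card, Fintype.card_coe]
  obtain ⟨⟨p, hpd⟩, hker, hp0⟩ :=
    Submodule.exists_mem_ne_zero_of_ne_bot (LinearMap.ker_ne_bot_of_finrank_lt hdim (f := ev))
  refine ⟨p, ?_, (mem_restrictTotalDegree _ _ _).1 hpd, fun x hx => ?_⟩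
  · simpa using hp0
  · exact congr_fun hker ⟨x, hx⟩

theorem exists_subset_nIndep_of_not_liesOnCurve {d : ℕ} {X : Finset Pt}
    (hX : ¬LiesOnCurve d X) : ∃ Y ⊆ X, ¬LiesOnCurve d Y ∧ NIndep d Y := by
  obtain ⟨Y, hYX, hmin⟩ := exists_minimal_le_of_wellFoundedLT (fun Y => ¬LiesOnCurve d Y) X hX
  refine ⟨Y, hYX, hmin.prop, fun A hA => ?_⟩
  obtain ⟨p, hp0, hpd, hpY⟩ : LiesOnCurve d (Y.erase A) :=
    not_not.1 (hmin.not_prop_of_lt (Finset.erase_ssubset hA))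
  have hvan : ∀ x ∈ Y, x ≠ A → eval x p = 0 := fun x hx hxA =>
    hpY x (Finset.mem_erase.2 ⟨hxA, hx⟩)
  refine ⟨p, hpd, hvan, fun hpA => hmin.prop ⟨p, hp0, hpd, fun x hx => ?_⟩⟩
  by_cases hxA : x = A
  · rwa [hxA]
  · exact hvan x hx hxA

theorem EssDep.forall_eval_eq_zero_of_nIndep {k d e : ℕ} {X Y : Finset Pt} (hX : EssDep k X)
    (hY : NIndep d Y) (hde : d + e ≤ k) {q : Poly2} (hq : q.totalDegree ≤ e)
    (hqXY : ∀ x ∈ X \ Y, eval x q = 0) : ∀ x ∈ X, eval x q = 0 := by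
  intro x hx
  by_cases hxY : x ∈ Y
  swap
  · exact hqXY x (Finset.mem_sdiff.2 ⟨hx, hxY⟩)
  obtain ⟨p, hpd, hpY, hpx⟩ := hY x hxY
  have hpq : eval x (p * q) = 0 :=
    hX x hx (p * q) ((totalDegree_mul p q).trans (by omega)) fun y hy hyx => by
      rw [eval_mul]
      by_cases hyY : y ∈ Y
      · rw [hpY y hyY hyx, zero_mul]
      · rw [hqXY y (Finset.mem_sdiff.2 ⟨hy, hyY⟩), mul_zero]
  simpa [eval_mul, hpx] using hpq

theorem two_mul_mul_add_three_lt (m e : ℕ) :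
    2 * (m * (e + 3)) < (m + 1) * (m + 2) + (e + 1) * (e + 2) := by
  -- with `a = e + 3 - m`, the difference of the two sides is `a² - 3a + 4 = ((2a - 3)² + 7) / 4`
  zify
  nlinarith [sq_nonneg (2 * ((e : ℤ) + 3 - m) - 3)]

theorem stmt18_general (m n : ℕ) (X : Finset Pt)
    (hcard : X.card ≤ m * n) (hdep : EssDep (m + n - 3) X) :
    (∃ p : Poly2, p ≠ 0 ∧ p.totalDegree ≤ m ∧ ∀ x ∈ X, eval x p = 0) ∨
    (∃ q : Poly2, q ≠ 0 ∧ q.totalDegree ≤ n - 3 ∧ ∀ x ∈ X, eval x q = 0) := by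
  by_cases hm : LiesOnCurve m X
  · exact .inl hm
  obtain ⟨Y, hYX, hYm, hYind⟩ := exists_subset_nIndep_of_not_liesOnCurve hm
  have hY : (m + 1) * (m + 2) ≤ 2 * Y.card := by
    rw [← two_mul_finrank_restrictTotalDegree_fin_two (K := ℂ)]
    exact Nat.mul_le_mul_left 2 (not_lt.1 (mt liesOnCurve_of_card_lt hYm))
  have hYXcard := Finset.card_le_card hYX
  have hn : 3 ≤ n := by
    by_contra hn
    nlinarith [Nat.mul_le_mul_left m (show n ≤ 2 by omega), Nat.le_mul_self m]
  have hXY : (X \ Y).card < finrank ℂ (restrictTotalDegree (Fin 2) ℂ (n - 3)) := by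
    have hdim := two_mul_finrank_restrictTotalDegree_fin_two (K := ℂ) (n - 3)
    rw [Finset.card_sdiff_of_subset hYX, Nat.sub_lt_iff_lt_add hYXcard]
    obtain ⟨e, rfl⟩ : ∃ e, n = e + 3 := ⟨n - 3, by omega⟩
    rw [Nat.add_sub_cancel] at hdim ⊢
    linarith [two_mul_mul_add_three_lt m e]
  obtain ⟨q, hq0, hqd, hqXY⟩ := liesOnCurve_of_card_lt hXY
  exact .inr ⟨q, hq0, hqd, hdep.forall_eval_eq_zero_of_nIndep hYind (by omega) hqd hqXY⟩

theorem stmt18 (m n : ℕ) (hmn : m ≤ n) (X : Finset Pt)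
    (hcard : X.card ≤ m * n) (hdep : EssDep (m + n - 3) X) :
    (∃ p : Poly2, p ≠ 0 ∧ p.totalDegree ≤ m ∧ ∀ x ∈ X, eval x p = 0) ∨
    (∃ q : Poly2, q ≠ 0 ∧ q.totalDegree ≤ n - 3 ∧ ∀ x ∈ X, eval x q = 0) :=
  stmt18_general m n X hcard hdep
end
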